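/- arXiv:2105.06327 — 13 statements merged into one kernel-verified Lean document; each statement's English description precedes it below -/
import Mathlib

section
/- Let V be a Stinespring isometry defining complementary channels Φ and Φc, and assume the channels are minimally defined, i.e. rank Φ(1_d) = dOut and rank Φc(1_d) = dEnv. Then: if dOut > dEnv and d > dOut·(dEnv − 1), there exists a density matrix ρ with S(Φ(ρ)) > S(Φc(ρ)); and if dEnv > dOut and d > dEnv·(dOut − 1), there exists a density matrix ρ with S(Φc(ρ)) > S(Φ(ρ)). -/
open Matrix
open scoped ComplexOrder

/-- The channel defined by a Stinespring isometry `V`: partial trace over the environment. -/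
noncomputable def phiOut {d dOut dEnv : ℕ} (V : Matrix (Fin dOut × Fin dEnv) (Fin d) ℂ)
    (X : Matrix (Fin d) (Fin d) ℂ) : Matrix (Fin dOut) (Fin dOut) ℂ :=
  Matrix.of fun i k => ∑ j, (V * X * Vᴴ) (i, j) (k, j)

/-- The complementary channel defined by a Stinespring isometry `V`: partial trace over the
output. -/
noncomputable def phiEnv {d dOut dEnv : ℕ} (V : Matrix (Fin dOut × Fin dEnv) (Fin d) ℂ)
    (X : Matrix (Fin d) (Fin d) ℂ) : Matrix (Fin dEnv) (Fin dEnv) ℂ :=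
  Matrix.of fun j l => ∑ i, (V * X * Vᴴ) (i, j) (i, l)

/-- Von Neumann entropy of a (Hermitian) matrix, via its eigenvalues. -/
noncomputable def vnEntropy {n : ℕ} (M : Matrix (Fin n) (Fin n) ℂ) : ℝ :=
  if h : M.IsHermitian then -∑ i, h.eigenvalues i * Real.log (h.eigenvalues i) else 0

/-!
Feed in the maximally mixed state `ρ = 1/d`. Since `V Vᴴ ≤ 1`, taking the partial trace gives
`Φ(1) ≤ dEnv • 1`, so every eigenvalue of `Φ(ρ)` is at most `dEnv/d ≤ 1/dEnv`, using
`dEnv² ≤ d`, which follows from `d > dOut (dEnv - 1)` and `dOut > dEnv`. By minimality all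
`dOut > dEnv` eigenvalues are positive, and a probability vector with more than `dEnv` entries,
all at most `1/dEnv`, has entropy strictly above `log dEnv`; on the other hand
`S(Φc(ρ)) ≤ log dEnv` always. The second claim is the first one for the isometry with its
two tensor factors swapped, which exchanges `Φ` and `Φc`.
-/

namespace Real

lemma negMulLog_eq_mul_log_inv (x : ℝ) : negMulLog x = x * log x⁻¹ := by
  rw [negMulLog, log_inv, neg_mul, mul_neg]

lemma negMulLog_le_mul_log_add_inv_sub {x c : ℝ} (hx : 0 ≤ x) (hc : 0 < c) :
    negMulLog x ≤ x * log c + c⁻¹ - x := by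
  have h := negMulLog_le_one_sub_self (mul_nonneg hc.le hx)
  rw [negMulLog_mul, negMulLog_eq_mul_log_inv c, log_inv] at h
  refine le_of_mul_le_mul_left ?_ hc
  rw [mul_sub, mul_add, mul_inv_cancel₀ hc.ne']
  linarith

lemma sum_negMulLog_le_log_card {ι : Type*} [Fintype ι] {p : ι → ℝ} (hp : ∀ i, 0 ≤ p i)
    (hsum : ∑ i, p i = 1) : ∑ i, negMulLog (p i) ≤ log (Fintype.card ι) := by
  have hcard : (0 : ℝ) < Fintype.card ι := by
    have : Nonempty ι := by
      by_contra h
      simp [not_nonempty_iff.mp h] at hsum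
    exact_mod_cast Fintype.card_pos
  calc ∑ i, negMulLog (p i)
      ≤ ∑ i, (p i * log (Fintype.card ι) + (Fintype.card ι : ℝ)⁻¹ - p i) :=
        Finset.sum_le_sum fun i _ => negMulLog_le_mul_log_add_inv_sub (hp i) hcard
    _ = log (Fintype.card ι) := by
        simp only [Finset.sum_sub_distrib, Finset.sum_add_distrib, ← Finset.sum_mul, hsum,
          Finset.sum_const, Finset.card_univ, nsmul_eq_mul, mul_inv_cancel₀ hcard.ne']
        ring

lemma log_lt_sum_negMulLog {ι : Type*} [Fintype ι] {p : ι → ℝ} (hp : ∀ i, 0 < p i)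
    (hsum : ∑ i, p i = 1) {c : ℝ} (hc : 0 < c) (hcard : c < Fintype.card ι)
    (hle : ∀ i, p i ≤ c⁻¹) : log c < ∑ i, negMulLog (p i) := by
  have hterm : ∀ i, p i * log c ≤ negMulLog (p i) := fun i => by
    rw [negMulLog_eq_mul_log_inv]
    exact mul_le_mul_of_nonneg_left (log_le_log hc (le_inv_comm₀ (hp i) hc |>.mp (hle i)))
      (hp i).le
  obtain ⟨i₀, hi₀⟩ : ∃ i, p i < c⁻¹ := by
    by_contra! h
    have : (Fintype.card ι : ℝ) * c⁻¹ = 1 := by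
      rw [← hsum, Finset.sum_congr rfl fun i _ => le_antisymm (hle i) (h i)]
      simp
    field_simp at this
    linarith
  calc log c = ∑ i, p i * log c := by rw [← Finset.sum_mul, hsum, one_mul]
    _ < ∑ i, negMulLog (p i) := by
      refine Finset.sum_lt_sum (fun i _ => hterm i) ⟨i₀, Finset.mem_univ _, ?_⟩
      rw [negMulLog_eq_mul_log_inv]
      exact mul_lt_mul_of_pos_left (log_lt_log hc (lt_inv_comm₀ (hp i₀) hc |>.mp hi₀)) (hp i₀)

end Real

namespace Matrix

section spectral

variable {𝕜 n : Type*} [RCLike 𝕜] [Fintype n] [DecidableEq n] {A : Matrix n n 𝕜}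

lemma IsHermitian.sum_eigenvalues_eq_one (hA : A.IsHermitian) (htr : A.trace = 1) :
    ∑ i, hA.eigenvalues i = 1 :=
  RCLike.ofReal_injective (K := 𝕜) <| by
    rw [RCLike.ofReal_sum, ← hA.trace_eq_sum_eigenvalues, htr, RCLike.ofReal_one]

lemma IsHermitian.eigenvalues_le_of_posSemidef_sub (hA : A.IsHermitian) {c : ℝ}
    (h : (c • 1 - A).PosSemidef) (i : n) : hA.eigenvalues i ≤ c := by
  set v := ⇑(hA.eigenvectorBasis i)
  have hv : star v ⬝ᵥ v = 1 := by
    rw [dotProduct_comm, ← EuclideanSpace.inner_eq_star_dotProduct,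
      inner_self_eq_norm_sq_to_K, hA.eigenvectorBasis.orthonormal.1 i]
    simp
  have := h.re_dotProduct_nonneg v
  rw [sub_mulVec, dotProduct_sub, map_sub, ← hA.eigenvalues_eq, smul_mulVec, one_mulVec,
    dotProduct_smul, hv] at this
  simpa [RCLike.smul_re] using this

lemma PosSemidef.eigenvalues_pos_of_rank_eq (hA : A.PosSemidef) (hr : A.rank = Fintype.card n)
    (i : n) : 0 < hA.1.eigenvalues i := by
  refine (hA.eigenvalues_nonneg i).lt_of_ne' fun h => ?_
  have := Fintype.card_subtype_lt (p := fun j => hA.1.eigenvalues j ≠ 0) (not_not.mpr h)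
  rw [← hA.1.rank_eq_card_non_zero_eigs, hr] at this
  exact this.false

end spectral

section partialTrace

variable {R m n : Type*} [Fintype n]

def partialTraceRight [CommSemiring R] : Matrix (m × n) (m × n) R →ₗ[R] Matrix m m R where
  toFun N := of fun i k => ∑ j, N (i, j) (k, j)
  map_add' M N := by ext; simp [Finset.sum_add_distrib]
  map_smul' c N := by ext; simp [Finset.mul_sum]

lemma partialTraceRight_eq_sum_submatrix [CommSemiring R] (N : Matrix (m × n) (m × n) R) :
    partialTraceRight N = ∑ j, N.submatrix (·, j) (·, j) := by
  ext; simp [partialTraceRight, sum_apply]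

lemma trace_partialTraceRight [CommSemiring R] [Fintype m] (N : Matrix (m × n) (m × n) R) :
    (partialTraceRight N).trace = N.trace := by
  simp [partialTraceRight, trace, Fintype.sum_prod_type]

lemma partialTraceRight_one [CommSemiring R] [DecidableEq m] [DecidableEq n] :
    partialTraceRight (1 : Matrix (m × n) (m × n) R) = (Fintype.card n : R) • 1 := by
  ext i k
  by_cases h : i = k <;> simp [partialTraceRight, one_apply, h]

lemma PosSemidef.partialTraceRight [CommRing R] [PartialOrder R] [StarRing R]
    [IsOrderedAddMonoid R] {N : Matrix (m × n) (m × n) R} (hN : N.PosSemidef) :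
    (partialTraceRight N).PosSemidef := by
  rw [partialTraceRight_eq_sum_submatrix]
  exact posSemidef_sum _ fun j _ => hN.submatrix _

end partialTrace

lemma posSemidef_one_sub_mul_conjTranspose {𝕜 m n : Type*} [RCLike 𝕜] [Fintype m] [Fintype n]
    [DecidableEq m] [DecidableEq n] {V : Matrix m n 𝕜} (hV : Vᴴ * V = 1) :
    (1 - V * Vᴴ).PosSemidef := by
  have hP : (1 - V * Vᴴ)ᴴ * (1 - V * Vᴴ) = 1 - V * Vᴴ := by
    have hidem : V * Vᴴ * (V * Vᴴ) = V * Vᴴ := by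
      rw [Matrix.mul_assoc, ← Matrix.mul_assoc Vᴴ, hV, Matrix.one_mul]
    simp only [conjTranspose_sub, conjTranspose_one, conjTranspose_mul, conjTranspose_conjTranspose,
      sub_mul, mul_sub, Matrix.one_mul, Matrix.mul_one, hidem]
    abel
  exact hP ▸ posSemidef_conjTranspose_mul_self _

end Matrix

section vnEntropy

variable {n : ℕ} {A : Matrix (Fin n) (Fin n) ℂ}

lemma vnEntropy_eq_sum_negMulLog (hA : A.IsHermitian) :
    vnEntropy A = ∑ i, Real.negMulLog (hA.eigenvalues i) := by
  simp only [vnEntropy, dif_pos hA, Real.negMulLog, neg_mul, Finset.sum_neg_distrib]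

lemma vnEntropy_le_log (hA : A.PosSemidef) (htr : A.trace = 1) : vnEntropy A ≤ Real.log n := by
  rw [vnEntropy_eq_sum_negMulLog hA.1]
  simpa using Real.sum_negMulLog_le_log_card hA.eigenvalues_nonneg
    (hA.1.sum_eigenvalues_eq_one htr)

lemma log_lt_vnEntropy (hA : A.PosSemidef) (htr : A.trace = 1) (hr : A.rank = n) {c : ℝ}
    (hc : 0 < c) (hcn : c < n) (hle : ∀ i, hA.1.eigenvalues i ≤ c⁻¹) :
    Real.log c < vnEntropy A := by
  rw [vnEntropy_eq_sum_negMulLog hA.1]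
  refine Real.log_lt_sum_negMulLog (fun i => hA.eigenvalues_pos_of_rank_eq ?_ i)
    (hA.1.sum_eigenvalues_eq_one htr) hc (by simpa using hcn) hle
  simpa using hr

end vnEntropy

noncomputable def maximallyMixed (d : ℕ) : Matrix (Fin d) (Fin d) ℂ := ((d : ℝ)⁻¹) • 1

lemma maximallyMixed_posSemidef (d : ℕ) : (maximallyMixed d).PosSemidef :=
  PosSemidef.one.smul (by positivity)

lemma trace_maximallyMixed {d : ℕ} (hd : d ≠ 0) : (maximallyMixed d).trace = 1 := by
  simp [maximallyMixed, trace_smul, hd]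

section channel

variable {d dOut dEnv : ℕ} {V : Matrix (Fin dOut × Fin dEnv) (Fin d) ℂ}

lemma phiOut_eq_partialTraceRight (V : Matrix (Fin dOut × Fin dEnv) (Fin d) ℂ)
    (X : Matrix (Fin d) (Fin d) ℂ) : phiOut V X = partialTraceRight (V * X * Vᴴ) := rfl

lemma phiEnv_eq_phiOut_submatrix_swap (V : Matrix (Fin dOut × Fin dEnv) (Fin d) ℂ)
    (X : Matrix (Fin d) (Fin d) ℂ) : phiEnv V X = phiOut (V.submatrix Prod.swap id) X := rfl

lemma phiOut_eq_phiEnv_submatrix_swap (V : Matrix (Fin dOut × Fin dEnv) (Fin d) ℂ)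
    (X : Matrix (Fin d) (Fin d) ℂ) : phiOut V X = phiEnv (V.submatrix Prod.swap id) X := rfl

lemma conjTranspose_mul_submatrix_swap (V : Matrix (Fin dOut × Fin dEnv) (Fin d) ℂ) :
    (V.submatrix Prod.swap id)ᴴ * V.submatrix Prod.swap id = Vᴴ * V := by
  simpa using submatrix_mul_equiv Vᴴ V id (Equiv.prodComm _ _).symm id

lemma Matrix.PosSemidef.phiOut {X : Matrix (Fin d) (Fin d) ℂ} (hX : X.PosSemidef) :
    (phiOut V X).PosSemidef :=
  (hX.mul_mul_conjTranspose_same V).partialTraceRight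

lemma trace_phiOut (hV : Vᴴ * V = 1) (X : Matrix (Fin d) (Fin d) ℂ) :
    (phiOut V X).trace = X.trace := by
  rw [phiOut_eq_partialTraceRight, trace_partialTraceRight, trace_mul_cycle, hV, Matrix.one_mul]

lemma Matrix.PosSemidef.phiEnv {X : Matrix (Fin d) (Fin d) ℂ} (hX : X.PosSemidef) :
    (phiEnv V X).PosSemidef := by
  rw [phiEnv_eq_phiOut_submatrix_swap]
  exact hX.phiOut

lemma trace_phiEnv (hV : Vᴴ * V = 1) (X : Matrix (Fin d) (Fin d) ℂ) :
    (phiEnv V X).trace = X.trace := by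
  rw [phiEnv_eq_phiOut_submatrix_swap]
  exact trace_phiOut ((conjTranspose_mul_submatrix_swap V).trans hV) X

lemma phiOut_smul (c : ℝ) (X : Matrix (Fin d) (Fin d) ℂ) :
    phiOut V (c • X) = c • phiOut V X := by
  rw [phiOut_eq_partialTraceRight, Matrix.mul_smul, Matrix.smul_mul, LinearMap.map_smul_of_tower]
  rfl

lemma posSemidef_smul_one_sub_phiOut_one (hV : Vᴴ * V = 1) :
    ((dEnv : ℝ) • 1 - phiOut V 1).PosSemidef := by
  have h : (dEnv : ℝ) • 1 - phiOut V 1 = partialTraceRight (1 - V * Vᴴ) := by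
    rw [map_sub, partialTraceRight_one, phiOut_eq_partialTraceRight, Matrix.mul_one]
    simp only [Fintype.card_fin, Nat.cast_smul_eq_nsmul]
  exact h ▸ (posSemidef_one_sub_mul_conjTranspose hV).partialTraceRight

end channel

lemma Nat.mul_self_le_of_mul_pred_lt {a b d : ℕ} (hab : a < b) (hd : b * (a - 1) < d) :
    a * a ≤ d := by
  obtain _ | a := a
  · simp
  · simp only [add_tsub_cancel_right] at hd
    nlinarith

theorem vnEntropy_phiEnv_lt_vnEntropy_phiOut {d dOut dEnv : ℕ} (hEnv : 0 < dEnv)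
    {V : Matrix (Fin dOut × Fin dEnv) (Fin d) ℂ} (hV : Vᴴ * V = 1)
    (hminOut : (phiOut V 1).rank = dOut) (hlt : dEnv < dOut) (hd : dOut * (dEnv - 1) < d) :
    vnEntropy (phiEnv V (maximallyMixed d)) < vnEntropy (phiOut V (maximallyMixed d)) := by
  have hd₀ : (0 : ℝ) < d := by exact_mod_cast hd.pos
  have hEnvR : (0 : ℝ) < dEnv := by exact_mod_cast hEnv
  have hρ := maximallyMixed_posSemidef d
  have hρtr := trace_maximallyMixed hd.pos.ne'
  have hA : (phiOut V (maximallyMixed d)).PosSemidef := hρ.phiOut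
  have hA_eq : phiOut V (maximallyMixed d) = (d : ℝ)⁻¹ • phiOut V 1 := phiOut_smul _ _
  have hrank : (phiOut V (maximallyMixed d)).rank = dOut := by
    rw [hA_eq, ← Complex.coe_smul, rank_smul_of_mem_nonZeroDivisors _
      (mem_nonZeroDivisors_of_ne_zero (by simpa using hd₀.ne')), hminOut]
  have hle : ∀ i, hA.1.eigenvalues i ≤ (dEnv : ℝ)⁻¹ := by
    have hbound : ((dEnv / d : ℝ) • 1 - phiOut V (maximallyMixed d)).PosSemidef := by
      rw [hA_eq, div_eq_inv_mul, ← smul_smul, ← smul_sub]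
      exact (posSemidef_smul_one_sub_phiOut_one hV).smul (by positivity)
    have hsq : (dEnv : ℝ) * dEnv ≤ d := by exact_mod_cast Nat.mul_self_le_of_mul_pred_lt hlt hd
    intro i
    refine (hA.1.eigenvalues_le_of_posSemidef_sub hbound i).trans ?_
    rw [div_le_iff₀ hd₀, ← div_eq_inv_mul, le_div_iff₀ hEnvR]
    exact hsq
  calc vnEntropy (phiEnv V (maximallyMixed d))
      ≤ Real.log dEnv := vnEntropy_le_log hρ.phiEnv (by rw [trace_phiEnv hV, hρtr])
    _ < vnEntropy (phiOut V (maximallyMixed d)) :=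
        log_lt_vnEntropy hA (by rw [trace_phiOut hV, hρtr]) hrank hEnvR
          (by exact_mod_cast hlt) hle

theorem stmt3 {d dOut dEnv : ℕ} (hd : 0 < d) (hOut : 0 < dOut) (hEnv : 0 < dEnv)
    (V : Matrix (Fin dOut × Fin dEnv) (Fin d) ℂ) (hV : Vᴴ * V = 1)
    (hminOut : (phiOut V 1).rank = dOut) (hminEnv : (phiEnv V 1).rank = dEnv) :
    (dOut > dEnv → d > dOut * (dEnv - 1) →
      ∃ ρ : Matrix (Fin d) (Fin d) ℂ, ρ.PosSemidef ∧ ρ.trace = 1 ∧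
        vnEntropy (phiOut V ρ) > vnEntropy (phiEnv V ρ)) ∧
    (dEnv > dOut → d > dEnv * (dOut - 1) →
      ∃ ρ : Matrix (Fin d) (Fin d) ℂ, ρ.PosSemidef ∧ ρ.trace = 1 ∧
        vnEntropy (phiEnv V ρ) > vnEntropy (phiOut V ρ)) := by
  refine ⟨fun hlt hdim => ⟨maximallyMixed d, maximallyMixed_posSemidef d,
      trace_maximallyMixed hd.ne', vnEntropy_phiEnv_lt_vnEntropy_phiOut hEnv hV hminOut hlt hdim⟩,
    fun hlt hdim => ⟨maximallyMixed d, maximallyMixed_posSemidef d,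
      trace_maximallyMixed hd.ne', ?_⟩⟩
  rw [phiEnv_eq_phiOut_submatrix_swap, phiOut_eq_phiEnv_submatrix_swap V]
  exact vnEntropy_phiEnv_lt_vnEntropy_phiOut hOut
    ((conjTranspose_mul_submatrix_swap V).trans hV) hminEnv hlt hdim
end

section
/- Let d1 ≤ d2 be positive integers, let S be a ℂ-linear subspace (Submodule) of Matrix (Fin d1) (Fin d2) ℂ, and let r be a natural number such that every matrix X ∈ S has rank X ≤ r. Then the dimension of S satisfies Module.finrank ℂ S ≤ r · d2. -/
/-!
Let `s` be the largest rank of a matrix in `S`, attained at `X₀`. After padding with zero rows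
and multiplying by invertible matrices, `X₀ = [[1, 0], [0, 0]]` with an `s × s` identity block.
For `Y = [[A, B], [C, D]] ∈ S` every `(s+1)`-minor of `X₀ + t Y` vanishes for all `t`; read as a
polynomial identity in `t` this forces `D = 0` and `C B = 0`, and polarization gives
`C_Z B_Y + C_Y B_Z = 0` on `S`. So `Y ↦ (C, B)` has a kernel of dimension at most `s²`. On its
image, let `L` be the span of the rows of those `C` whose `B` vanishes: these elements embed in
`(d₁ - s)` copies of `L`, while every column of every `B` is orthogonal to `L`. This bounds the
image by `(d₁ - s) dim L + (d₂ - s)(s - dim L) ≤ (d₂ - s) s`, so `dim S ≤ s d₂ ≤ r d₂`.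
-/

open Matrix Polynomial Module

variable {K : Type*} [Field K]

theorem Matrix.det_eq_zero_of_forall_ne_zero_det_add_smul [Infinite K] {n : Type*} [Fintype n]
    [DecidableEq n] (M N : Matrix n n K) (h : ∀ t : K, t ≠ 0 → (M + t • N).det = 0) :
    M.det = 0 := by
  set P : K[X] := (M.map C + (X : K[X]) • N.map C).det
  have hP : ∀ t, P.eval t = (M + t • N).det := fun t => by
    rw [← coe_evalRingHom, RingHom.map_det]
    congr 1
    ext i j
    simp [mul_comm t]
  have hP0 : P = 0 := P.eq_zero_of_infinite_isRoot <|
    (Set.finite_singleton (0 : K)).infinite_compl.mono fun t ht => by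
      simpa [hP] using h t ht
  simpa [hP] using congrArg (eval 0) hP0

theorem Matrix.eq_zero_and_mul_eq_zero_of_det_fromBlocks_smul [Infinite K] {m : Type*}
    [Fintype m] [DecidableEq m] (A : Matrix m m K) (b : Matrix m Unit K) (c : Matrix Unit m K)
    (d : Matrix Unit Unit K)
    (h : ∀ t : K, (fromBlocks (1 + t • A) (t • b) (t • c) (t • d)).det = 0) :
    d = 0 ∧ c * b = 0 := by
  -- Splitting off the factor `t` of the last row (and, once `d = 0`, of the last column) leaves
  -- a determinant that is affine in `t` and vanishes for `t ≠ 0`.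
  have hd : d = 0 := by
    have hdet : (fromBlocks 1 0 c d).det = 0 := by
      refine det_eq_zero_of_forall_ne_zero_det_add_smul _ (fromBlocks A b 0 0) fun t ht => ?_
      have := h t
      rw [show fromBlocks (1 + t • A) (t • b) (t • c) (t • d)
          = fromBlocks 1 0 0 (t • 1) * (fromBlocks 1 0 c d + t • fromBlocks A b 0 0) by
        simp [fromBlocks_smul, fromBlocks_add, fromBlocks_multiply], det_mul] at this
      simpa [det_fromBlocks_zero₁₂, ht] using this
    ext ⟨⟩ ⟨⟩
    simpa [det_fromBlocks_zero₁₂, det_unique] using hdet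
  refine ⟨hd, ?_⟩
  subst hd
  have hdet : (fromBlocks 1 b c 0).det = 0 := by
    refine det_eq_zero_of_forall_ne_zero_det_add_smul _ (fromBlocks A 0 0 0) fun t ht => ?_
    have := h t
    rw [show fromBlocks (1 + t • A) (t • b) (t • c) (t • 0)
        = fromBlocks 1 0 0 (t • 1) * (fromBlocks 1 b c 0 + t • fromBlocks A 0 0 0) *
          fromBlocks 1 0 0 (t • 1) by
      simp [fromBlocks_smul, fromBlocks_add, fromBlocks_multiply], det_mul, det_mul] at this
    simpa [det_fromBlocks_zero₁₂, ht] using this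
  ext ⟨⟩ ⟨⟩
  simpa [det_fromBlocks_one₁₁, det_unique] using hdet

theorem Matrix.det_eq_zero_of_rank_lt {n : Type*} [Fintype n] [DecidableEq n] (M : Matrix n n K)
    (h : M.rank < Fintype.card n) : M.det = 0 := by
  by_contra hM
  exact h.ne (rank_of_isUnit M ((isUnit_iff_isUnit_det M).mpr (Ne.isUnit hM)))

theorem Matrix.toBlocks₂₂_eq_zero_and_mul_eq_zero_of_rank_le [Infinite K]
    {m p q : Type*} [Fintype m] [Fintype q] [DecidableEq m] (Y : Matrix (m ⊕ p) (m ⊕ q) K)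
    (h : ∀ t : K, (fromBlocks 1 0 0 0 + t • Y).rank ≤ Fintype.card m) :
    Y.toBlocks₂₂ = 0 ∧ Y.toBlocks₂₁ * Y.toBlocks₁₂ = 0 := by
  have entry (i : p) (j : q) :
      Y.toBlocks₂₂ i j = 0 ∧ (Y.toBlocks₂₁ * Y.toBlocks₁₂) i j = 0 := by
    let rows : m ⊕ Unit → m ⊕ p := Sum.map id fun _ => i
    let cols : m ⊕ Unit → m ⊕ q := Sum.map id fun _ => j
    have hminor (t : K) : (fromBlocks 1 0 0 0 + t • Y).submatrix rows cols =
        fromBlocks (1 + t • Y.toBlocks₁₁) (t • Y.toBlocks₁₂.submatrix id fun _ => j)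
          (t • Y.toBlocks₂₁.submatrix (fun _ => i) id)
          (t • Y.toBlocks₂₂.submatrix (fun _ => i) fun _ => j) := by
      ext (k | k) (l | l) <;> simp [rows, cols, toBlocks₁₁, toBlocks₁₂, toBlocks₂₁, toBlocks₂₂]
    obtain ⟨hd, hcb⟩ := eq_zero_and_mul_eq_zero_of_det_fromBlocks_smul _ _ _ _ fun t => by
      rw [← hminor]
      refine det_eq_zero_of_rank_lt _ ((rank_submatrix_le _ _ _).trans_lt ?_)
      simpa using Nat.lt_succ_of_le (h t)
    exact ⟨congrFun₂ hd () (), by simpa [mul_apply] using congrFun₂ hcb () ()⟩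
  exact ⟨ext fun i j => (entry i j).1, ext fun i j => (entry i j).2⟩

theorem Module.finrank_fun_eq_card_mul (ι V : Type*) [Fintype ι] [AddCommGroup V] [Module K V]
    [FiniteDimensional K V] : finrank K (ι → V) = Fintype.card ι * finrank K V := by
  simp [Module.finrank_pi_fintype]

theorem Submodule.finrank_le_of_mul_add_mul_eq_zero {m p q : Type*} [Fintype m] [Fintype p]
    [Fintype q] [DecidableEq m] (T : Submodule K (Matrix p m K × Matrix m q K))
    (hT : ∀ x ∈ T, ∀ y ∈ T, x.1 * y.2 + y.1 * x.2 = 0)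
    (hpq : Fintype.card p ≤ Fintype.card q) :
    finrank K T ≤ Fintype.card q * Fintype.card m := by
  let L : Submodule K (m → K) := span K {v | ∃ x ∈ T, x.2 = 0 ∧ ∃ i, x.1 i = v}
  let W : Submodule K (m → K) := L.dualAnnihilator.map (dotProductEquiv K m).symm.toLinearMap
  have hLW : finrank K L + finrank K W = Fintype.card m := by
    rw [LinearEquiv.finrank_map_eq, Subspace.finrank_add_finrank_dualAnnihilator_eq,
      finrank_fintype_fun_eq_card]
  have hcol : ∀ y ∈ T, ∀ j, (fun k => y.2 k j) ∈ W := by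
    intro y hy j
    simp only [W, Submodule.mem_map_equiv, LinearEquiv.symm_symm, Submodule.mem_dualAnnihilator]
    intro w hw
    refine (Submodule.span_le (p := LinearMap.ker _)).mpr ?_ hw
    rintro _ ⟨x, hx, hx0, i, rfl⟩
    have := congrFun₂ (hT x hx y hy) i j
    simp only [hx0, Matrix.mul_zero, add_zero] at this
    simpa [mul_apply, dotProduct, mul_comm] using this
  let g : T →ₗ[K] Matrix m q K := (LinearMap.snd K (Matrix p m K) (Matrix m q K)).domRestrict T
  have hrange : finrank K (LinearMap.range g) ≤ Fintype.card q * finrank K W := by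
    let cols : (q → W) →ₗ[K] Matrix m q K :=
      (transposeLinearEquiv q m K K).toLinearMap ∘ₗ W.subtype.compLeft q
    calc finrank K (LinearMap.range g) ≤ finrank K (LinearMap.range cols) := by
          refine Submodule.finrank_mono ?_
          rintro _ ⟨⟨y, hy⟩, rfl⟩
          exact ⟨fun j => ⟨_, hcol y hy j⟩, by ext; rfl⟩
      _ ≤ Fintype.card q * finrank K W :=
          cols.finrank_range_le.trans_eq (finrank_fun_eq_card_mul ..)
  have hker : finrank K (LinearMap.ker g) ≤ Fintype.card p * finrank K L := by
    let rows : (LinearMap.ker g) →ₗ[K] (p → m → K) :=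
      LinearMap.fst K (Matrix p m K) (Matrix m q K) ∘ₗ T.subtype ∘ₗ (LinearMap.ker g).subtype
    have hrows : Function.Injective rows := by
      rintro ⟨⟨x, hx⟩, hx0⟩ ⟨⟨y, hy⟩, hy0⟩ h
      rw [LinearMap.mem_ker] at hx0 hy0
      exact Subtype.ext (Subtype.ext (Prod.ext h (hx0.trans hy0.symm)))
    calc finrank K (LinearMap.ker g) = finrank K (LinearMap.range rows) :=
          (LinearMap.finrank_range_of_inj hrows).symm
      _ ≤ finrank K (LinearMap.range (L.subtype.compLeft p)) := by
          refine Submodule.finrank_mono ?_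
          rintro _ ⟨⟨⟨x, hx⟩, hx0⟩, rfl⟩
          exact ⟨fun i => ⟨x.1 i, Submodule.subset_span ⟨x, hx, hx0, i, rfl⟩⟩, rfl⟩
      _ ≤ Fintype.card p * finrank K L :=
          (LinearMap.finrank_range_le _).trans_eq (finrank_fun_eq_card_mul ..)
  rw [← g.finrank_range_add_finrank_ker]
  nlinarith

theorem Submodule.finrank_le_of_fromBlocks_one_mem [Infinite K] {m p q : Type*} [Fintype m]
    [Fintype p] [Fintype q] [DecidableEq m] (S : Submodule K (Matrix (m ⊕ p) (m ⊕ q) K))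
    (hS1 : fromBlocks 1 0 0 0 ∈ S)
    (hS : ∀ Y ∈ S, Y.rank ≤ Fintype.card m) (hpq : Fintype.card p ≤ Fintype.card q) :
    finrank K S ≤ Fintype.card m * (Fintype.card m + Fintype.card q) := by
  let offDiag : Matrix (m ⊕ p) (m ⊕ q) K →ₗ[K] Matrix p m K × Matrix m q K :=
    { toFun Y := (Y.toBlocks₂₁, Y.toBlocks₁₂)
      map_add' _ _ := rfl
      map_smul' _ _ := rfl }
  have hblocks (Y) (hY : Y ∈ S) : Y.toBlocks₂₂ = 0 ∧ (offDiag Y).1 * (offDiag Y).2 = 0 :=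
    toBlocks₂₂_eq_zero_and_mul_eq_zero_of_rank_le Y fun t => hS _ (S.add_mem hS1 (S.smul_mem t hY))
  let g : S →ₗ[K] Matrix p m K × Matrix m q K := offDiag.domRestrict S
  have hpolar :
      ∀ x ∈ LinearMap.range g, ∀ y ∈ LinearMap.range g, x.1 * y.2 + y.1 * x.2 = 0 := by
    rintro _ ⟨⟨Z, hZ⟩, rfl⟩ _ ⟨⟨Y, hY⟩, rfl⟩
    have hsum := (hblocks _ (S.add_mem hZ hY)).2
    rw [map_add, Prod.fst_add, Prod.snd_add, Matrix.add_mul, Matrix.mul_add, Matrix.mul_add,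
      (hblocks Z hZ).2, (hblocks Y hY).2, zero_add, add_zero] at hsum
    exact hsum
  have hker : finrank K (LinearMap.ker g) ≤ Fintype.card m * Fintype.card m := by
    let diag : LinearMap.ker g →ₗ[K] Matrix m m K :=
      { toFun Y := Y.1.1.toBlocks₁₁
        map_add' _ _ := rfl
        map_smul' _ _ := rfl }
    have hdiag : Function.Injective diag := by
      have hfrom (Y : LinearMap.ker g) : Y.1.1 = fromBlocks (diag Y) 0 0 0 := by
        obtain ⟨hC, hB⟩ := Prod.ext_iff.mp (LinearMap.mem_ker.mp Y.2)
        conv_lhs => rw [← fromBlocks_toBlocks Y.1.1]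
        rw [show Y.1.1.toBlocks₂₁ = 0 from hC, show Y.1.1.toBlocks₁₂ = 0 from hB,
          (hblocks _ Y.1.2).1]
        rfl
      intro Y Y' h
      exact Subtype.ext (Subtype.ext ((hfrom Y).trans (h ▸ (hfrom Y').symm)))
    simpa using
      (LinearMap.finrank_le_finrank_of_injective hdiag).trans_eq (finrank_matrix K K m m)
  calc finrank K S = finrank K (LinearMap.range g) + finrank K (LinearMap.ker g) :=
        (g.finrank_range_add_finrank_ker).symm
    _ ≤ Fintype.card q * Fintype.card m + Fintype.card m * Fintype.card m :=
        add_le_add ((LinearMap.range g).finrank_le_of_mul_add_mul_eq_zero hpolar hpq) hker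
    _ = Fintype.card m * (Fintype.card m + Fintype.card q) := by ring

theorem Matrix.rank_mul_eq_right_of_mul_eq_one {l m n : Type*} [Fintype l] [Fintype m]
    [Fintype n] [DecidableEq m] {E : Matrix l m K} {F : Matrix m l K} (hFE : F * E = 1)
    (X : Matrix m n K) : (E * X).rank = X.rank := by
  refine le_antisymm (rank_mul_le_right E X) ?_
  calc X.rank = (F * (E * X)).rank := by rw [← Matrix.mul_assoc, hFE, Matrix.one_mul]
    _ ≤ (E * X).rank := rank_mul_le_right F (E * X)

theorem Submodule.exists_mem_forall_rank_le {m n : Type*} [Fintype m] [Fintype n]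
    (S : Submodule K (Matrix m n K)) : ∃ X₀ ∈ S, ∀ X ∈ S, X.rank ≤ X₀.rank := by
  have hfin : (rank '' (S : Set (Matrix m n K))).Finite :=
    (Set.finite_Iic (Fintype.card m)).subset <| by
      rintro _ ⟨X, -, rfl⟩
      exact X.rank_le_card_height
  obtain ⟨_, ⟨X₀, hX₀, rfl⟩, hmax⟩ := Set.exists_max_image _ id hfin ⟨_, 0, S.zero_mem, rfl⟩
  exact ⟨X₀, hX₀, fun X hX => hmax _ ⟨X, hX, rfl⟩⟩

theorem Submodule.finrank_square_le_mul_card_of_forall_rank_le [Infinite K] {n : Type*}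
    [Fintype n] (S : Submodule K (Matrix n n K)) (r : ℕ) (hr : ∀ X ∈ S, X.rank ≤ r) :
    finrank K S ≤ r * Fintype.card n := by
  classical
  obtain ⟨X₀, hX₀, hmax⟩ := S.exists_mem_forall_rank_le
  obtain ⟨V, U, e, hV, hU, hVX₀U⟩ := exists_rank_normal_form X₀
  let Φ : Matrix n n K →ₗ[K] Matrix _ _ K :=
    (reindexLinearEquiv K K e e).toLinearMap ∘ₗ LinearMap.mulLeft K V ∘ₗ LinearMap.mulRight K U
  have hΦ : Function.Injective Φ := (reindexLinearEquiv K K e e).injective.comp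
    (hV.mul_right_injective.comp hU.mul_left_injective)
  have hΦrank (X : Matrix n n K) : (Φ X).rank = X.rank := by
    calc (Φ X).rank = (V * (X * U)).rank := by simp [Φ, rank_submatrix]
      _ = X.rank := by
        rw [rank_mul_eq_right_of_isUnit_det V _ ((isUnit_iff_isUnit_det V).mp hV),
          rank_mul_eq_left_of_isUnit_det U X ((isUnit_iff_isUnit_det U).mp hU)]
  have hΦX₀ : Φ X₀ = fromBlocks 1 0 0 0 := by
    simp [Φ, ← Matrix.mul_assoc, hVX₀U]
  calc finrank K S = finrank K (S.map Φ) := (Submodule.equivMapOfInjective Φ hΦ S).finrank_eq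
    _ ≤ X₀.rank * (X₀.rank + (Fintype.card n - X₀.rank)) := by
        simpa using (S.map Φ).finrank_le_of_fromBlocks_one_mem ⟨X₀, hX₀, hΦX₀⟩
          (by rintro _ ⟨X, hX, rfl⟩; simpa [hΦrank] using hmax X hX) le_rfl
    _ = X₀.rank * Fintype.card n := by rw [Nat.add_sub_cancel' X₀.rank_le_card_height]
    _ ≤ r * Fintype.card n := Nat.mul_le_mul_right _ (hr X₀ hX₀)

theorem Submodule.finrank_le_mul_card_of_forall_rank_le [Infinite K] {m n : Type*} [Fintype m]
    [Fintype n] (S : Submodule K (Matrix m n K)) (hmn : Fintype.card m ≤ Fintype.card n) (r : ℕ)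
    (hr : ∀ X ∈ S, X.rank ≤ r) : finrank K S ≤ r * Fintype.card n := by
  classical
  obtain ⟨σ⟩ := Function.Embedding.nonempty_of_card_le hmn
  let E : Matrix n m K := (1 : Matrix n n K).submatrix id σ
  have hE : (1 : Matrix n n K).submatrix σ id * E = 1 := by
    rw [← submatrix_mul _ _ _ _ _ Function.bijective_id, Matrix.one_mul, submatrix_one_embedding]
  let pad : Matrix m n K →ₗ[K] Matrix n n K :=
    { toFun X := E * X
      map_add' := Matrix.mul_add E
      map_smul' c X := Matrix.mul_smul E c X }
  have hpad : Function.Injective pad := fun X Y h => by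
    simpa [pad, ← Matrix.mul_assoc, hE] using congrArg ((1 : Matrix n n K).submatrix σ id * ·) h
  calc finrank K S = finrank K (S.map pad) :=
        (Submodule.equivMapOfInjective pad hpad S).finrank_eq
    _ ≤ r * Fintype.card n := (S.map pad).finrank_square_le_mul_card_of_forall_rank_le r <| by
        rintro _ ⟨X, hX, rfl⟩
        simpa [pad, rank_mul_eq_right_of_mul_eq_one hE] using hr X hX

theorem stmt4_general {d1 d2 : ℕ} (h12 : d1 ≤ d2)
    (S : Submodule ℂ (Matrix (Fin d1) (Fin d2) ℂ)) (r : ℕ)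
    (hr : ∀ X ∈ S, Matrix.rank X ≤ r) :
    Module.finrank ℂ S ≤ r * d2 := by
  simpa using S.finrank_le_mul_card_of_forall_rank_le (by simpa using h12) r hr

theorem stmt4 {d1 d2 : ℕ} (h1 : 0 < d1) (h2 : 0 < d2) (h12 : d1 ≤ d2)
    (S : Submodule ℂ (Matrix (Fin d1) (Fin d2) ℂ)) (r : ℕ)
    (hr : ∀ X ∈ S, Matrix.rank X ≤ r) :
    Module.finrank ℂ S ≤ r * d2 :=
  stmt4_general h12 S r hr
end

section
/- Let d ≥ 1, let ω = exp(2πi/d), let X be the shift matrix with entries X a b = 1 if a = b + 1 (mod d) and 0 otherwise, let Z be the clock matrix with entries Z a a = ω^a and 0 off the diagonal, and set U i j = X^i * Z^j. Let P : Matrix (Fin d) (Fin d) ℝ have nonnegative entries, and define the generalized Pauli map Φ_P(ρ) = ∑_{i,j} (P i j : ℂ) • (U i j * ρ * (U i j)ᴴ). If every row of P has a nonzero entry, or every column of P has a nonzero entry, then there exists a unit vector ψ : Fin d → ℂ such that Φ_P(ψψᴴ) is positive definite (equivalently, rank Φ_P(ψψᴴ) = d). -/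
open Matrix
open scoped ComplexOrder

/-- The shift matrix `X` with `X a b = 1` iff `a = b + 1` (mod `d`). -/
def shiftMatrix (d : ℕ) [NeZero d] : Matrix (Fin d) (Fin d) ℂ :=
  Matrix.of fun a b => if a = b + 1 then 1 else 0

/-- The clock matrix `Z = diag(1, ω, ω², …)` with `ω = exp(2πi/d)`. -/
noncomputable def clockMatrix (d : ℕ) : Matrix (Fin d) (Fin d) ℂ :=
  Matrix.diagonal fun a => Complex.exp (2 * Real.pi * Complex.I / d) ^ (a : ℕ)

/-- The discrete Heisenberg–Weyl unitaries `U i j = Xⁱ Zʲ`. -/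
noncomputable def weylU {d : ℕ} [NeZero d] (i j : Fin d) : Matrix (Fin d) (Fin d) ℂ :=
  shiftMatrix d ^ (i : ℕ) * clockMatrix d ^ (j : ℕ)

/-- The generalized Pauli channel associated with a probability matrix `P`. -/
noncomputable def pauliChannel {d : ℕ} [NeZero d] (P : Matrix (Fin d) (Fin d) ℝ)
    (ρ : Matrix (Fin d) (Fin d) ℂ) : Matrix (Fin d) (Fin d) ℂ :=
  ∑ i, ∑ j, (P i j : ℂ) • (weylU i j * ρ * (weylU i j)ᴴ)

/-!
Since `U ψψᴴ Uᴴ = (Uψ)(Uψ)ᴴ`, the matrix `Φ_P(ψψᴴ) = ∑ P i j • (U i j ψ)(U i j ψ)ᴴ` is positive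
semidefinite, and it is positive definite as soon as the vectors `U i j ψ` with `P i j ≠ 0` leave
no nonzero vector orthogonal to all of them. For `ψ = e₀` these vectors are `U i j e₀ = e i`, so a
nonzero entry in every row suffices. For a constant `ψ`, `U i j ψ` is a nonzero multiple of the
Fourier vector `(ω ^ (a * j))_a`, and the Fourier vectors are the columns of the Vandermonde matrix
of the distinct roots `ω ^ a`, which is invertible; so a nonzero entry in every column suffices.
-/

section PosDef

variable {n ι : Type*} [Fintype n] [Fintype ι]

lemma star_dotProduct_vecMulVec_self_star_mulVec (w x : n → ℂ) :
    star x ⬝ᵥ (vecMulVec w (star w) *ᵥ x) = star (star w ⬝ᵥ x) * (star w ⬝ᵥ x) := by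
  rw [vecMulVec_mulVec, op_smul_eq_smul, dotProduct_smul, smul_eq_mul, mul_comm,
    star_dotProduct]

theorem posDef_sum_smul_vecMulVec_self_star (c : ι → ℝ) (hc : ∀ k, 0 ≤ c k) (w : ι → n → ℂ)
    (hw : ∀ x : n → ℂ, x ≠ 0 → ∃ k, c k ≠ 0 ∧ star (w k) ⬝ᵥ x ≠ 0) :
    (∑ k, (c k : ℂ) • vecMulVec (w k) (star (w k))).PosDef := by
  have hpsd : ∀ k, ((c k : ℂ) • vecMulVec (w k) (star (w k))).PosSemidef := fun k =>
    (posSemidef_vecMulVec_self_star (w k)).smul (by exact_mod_cast hc k)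
  refine posDef_iff_dotProduct_mulVec.mpr ⟨(posSemidef_sum _ fun k _ => hpsd k).isHermitian, ?_⟩
  intro x hx
  obtain ⟨k, hck, hwk⟩ := hw x hx
  rw [sum_mulVec, dotProduct_sum]
  refine Finset.sum_pos' (fun l _ => (hpsd l).dotProduct_mulVec_nonneg x) ⟨k, Finset.mem_univ _, ?_⟩
  rw [smul_mulVec, dotProduct_smul, star_dotProduct_vecMulVec_self_star_mulVec, smul_eq_mul]
  exact mul_pos (by exact_mod_cast (hc k).lt_of_ne' hck)
    ((star_mul_self_nonneg _).lt_of_ne' (mul_ne_zero (star_ne_zero.mpr hwk) hwk))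

end PosDef

lemma pow_finVal_sub_mul_pow {M : Type*} [Monoid M] {d : ℕ} [NeZero d] {ζ : M} (hζ : ζ ^ d = 1)
    (a b : Fin d) : ζ ^ ((a - b : Fin d) : ℕ) * ζ ^ (b : ℕ) = ζ ^ (a : ℕ) := by
  rw [← pow_add, pow_eq_pow_mod _ hζ, ← Fin.val_add, sub_add_cancel]

lemma clockMatrix_pow_mulVec_apply {d : ℕ} (k : ℕ) (v : Fin d → ℂ) (a : Fin d) :
    (clockMatrix d ^ k *ᵥ v) a =
      (Complex.exp (2 * Real.pi * Complex.I / d) ^ (a : ℕ)) ^ k * v a := by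
  rw [clockMatrix, diagonal_pow, mulVec_diagonal, Pi.pow_apply]

section Weyl

variable {d : ℕ} [NeZero d]

lemma shiftMatrix_mulVec_apply (v : Fin d → ℂ) (a : Fin d) :
    (shiftMatrix d *ᵥ v) a = v (a - 1) := by
  simp only [shiftMatrix, mulVec, dotProduct, of_apply, ite_mul, one_mul, zero_mul]
  simp_rw [eq_comm (a := a), ← eq_sub_iff_add_eq]
  simp

open Fin.NatCast in
lemma shiftMatrix_pow_mulVec_apply (k : ℕ) (v : Fin d → ℂ) (a : Fin d) :
    (shiftMatrix d ^ k *ᵥ v) a = v (a - k) := by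
  induction k generalizing v with
  | zero => simp
  | succ k ih =>
    rw [pow_succ, ← mulVec_mulVec, ih, shiftMatrix_mulVec_apply, Nat.cast_succ, sub_sub]

lemma weylU_mulVec_apply (i j : Fin d) (v : Fin d → ℂ) (a : Fin d) :
    (weylU i j *ᵥ v) a =
      (Complex.exp (2 * Real.pi * Complex.I / d) ^ ((a - i : Fin d) : ℕ)) ^ (j : ℕ) *
        v (a - i) := by
  rw [weylU, ← mulVec_mulVec, shiftMatrix_pow_mulVec_apply, Fin.cast_val_eq_self,
    clockMatrix_pow_mulVec_apply]

lemma weylU_mulVec_single_zero (i j : Fin d) : weylU i j *ᵥ Pi.single 0 1 = Pi.single i 1 := by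
  ext a
  rw [weylU_mulVec_apply]
  by_cases h : a = i <;> simp [h, sub_eq_zero]

lemma pauliChannel_vecMulVec (P : Matrix (Fin d) (Fin d) ℝ) (ψ : Fin d → ℂ) :
    pauliChannel P (vecMulVec ψ (star ψ)) = ∑ k : Fin d × Fin d,
      (P k.1 k.2 : ℂ) • vecMulVec (weylU k.1 k.2 *ᵥ ψ) (star (weylU k.1 k.2 *ᵥ ψ)) := by
  simp only [pauliChannel, mul_vecMulVec, vecMulVec_mul, ← star_mulVec, Fintype.sum_prod_type]

lemma weylU_mulVec_const (i j : Fin d) (c : ℂ) :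
    weylU i j *ᵥ (fun _ => c) =
      (c * ((Complex.exp (2 * Real.pi * Complex.I / d) ^ (i : ℕ)) ^ (j : ℕ))⁻¹) •
        fun a : Fin d => (Complex.exp (2 * Real.pi * Complex.I / d) ^ (a : ℕ)) ^ (j : ℕ) := by
  have hω := Complex.isPrimitiveRoot_exp d (NeZero.ne d)
  have hωij := pow_ne_zero (j : ℕ) (pow_ne_zero (i : ℕ) (hω.ne_zero (NeZero.ne d)))
  ext a
  rw [weylU_mulVec_apply, Pi.smul_apply, smul_eq_mul, ← pow_finVal_sub_mul_pow hω.pow_eq_one a i,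
    mul_pow]
  field_simp

end Weyl

section PauliChannel

variable {d : ℕ} [NeZero d] (P : Matrix (Fin d) (Fin d) ℝ)

theorem posDef_pauliChannel_vecMulVec (hP : ∀ i j, 0 ≤ P i j) (ψ : Fin d → ℂ)
    (hψ : ∀ x : Fin d → ℂ, x ≠ 0 → ∃ i j, P i j ≠ 0 ∧ star (weylU i j *ᵥ ψ) ⬝ᵥ x ≠ 0) :
    (pauliChannel P (vecMulVec ψ (star ψ))).PosDef := by
  rw [pauliChannel_vecMulVec]
  refine posDef_sum_smul_vecMulVec_self_star (fun k : Fin d × Fin d => P k.1 k.2)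
    (fun k => hP k.1 k.2) (fun k => weylU k.1 k.2 *ᵥ ψ) fun x hx => ?_
  obtain ⟨i, j, hij⟩ := hψ x hx
  exact ⟨(i, j), hij⟩

theorem posDef_pauliChannel_single_zero (hP : ∀ i j, 0 ≤ P i j) (hrow : ∀ i, ∃ j, P i j ≠ 0) :
    (pauliChannel P (vecMulVec (Pi.single 0 1) (star (Pi.single 0 1)))).PosDef := by
  refine posDef_pauliChannel_vecMulVec P hP _ fun x hx => ?_
  obtain ⟨i, hi⟩ := Function.ne_iff.mp hx
  obtain ⟨j, hj⟩ := hrow i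
  refine ⟨i, j, hj, ?_⟩
  rwa [weylU_mulVec_single_zero, ← Pi.single_star, star_one, single_one_dotProduct]

theorem posDef_pauliChannel_const (hP : ∀ i j, 0 ≤ P i j) (hcol : ∀ j, ∃ i, P i j ≠ 0) {c : ℂ}
    (hc : c ≠ 0) : (pauliChannel P (vecMulVec (fun _ => c) (star fun _ => c))).PosDef := by
  have hω := Complex.isPrimitiveRoot_exp d (NeZero.ne d)
  set V := vandermonde fun a : Fin d => Complex.exp (2 * Real.pi * Complex.I / d) ^ (a : ℕ)
  have hV : V.det ≠ 0 :=
    det_vandermonde_ne_zero_iff.mpr fun a b h => Fin.ext (hω.pow_inj a.isLt b.isLt h)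
  refine posDef_pauliChannel_vecMulVec P hP _ fun x hx => ?_
  obtain ⟨j, hj⟩ : ∃ j, (star x ᵥ* V) j ≠ 0 := by
    by_contra! h
    exact hx (star_eq_zero.mp (eq_zero_of_vecMul_eq_zero hV (funext h)))
  obtain ⟨i, hi⟩ := hcol j
  refine ⟨i, j, hi, ?_⟩
  have hωij := pow_ne_zero (j : ℕ) (pow_ne_zero (i : ℕ) (hω.ne_zero (NeZero.ne d)))
  rw [weylU_mulVec_const, star_smul, smul_dotProduct, star_dotProduct]
  exact smul_ne_zero (star_ne_zero.mpr (mul_ne_zero hc (inv_ne_zero hωij))) (star_ne_zero.mpr hj)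

end PauliChannel

theorem stmt5 {d : ℕ} [NeZero d] (P : Matrix (Fin d) (Fin d) ℝ)
    (hP : ∀ i j, 0 ≤ P i j)
    (hrc : (∀ i, ∃ j, P i j ≠ 0) ∨ (∀ j, ∃ i, P i j ≠ 0)) :
    ∃ ψ : Fin d → ℂ, (∑ i, Complex.normSq (ψ i) = 1) ∧
      (pauliChannel P (vecMulVec ψ (star ψ))).PosDef := by
  rcases hrc with hrow | hcol
  · refine ⟨Pi.single 0 1, ?_, posDef_pauliChannel_single_zero P hP hrow⟩
    simp [Pi.single_apply, apply_ite Complex.normSq]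
  · have hd : (0 : ℝ) < d := Nat.cast_pos.mpr (NeZero.pos d)
    refine ⟨fun _ => ((Real.sqrt d)⁻¹ : ℝ), ?_, posDef_pauliChannel_const P hP hcol ?_⟩
    · simp
    · exact Complex.ofReal_ne_zero.mpr (inv_ne_zero (Real.sqrt_pos.mpr hd).ne')
end

section
/- Let Φγ be the MAD channel with decay rates γ satisfying γ i j ≥ 0 for i < j and ∑_{i<j} γ i j ≤ 1 for each j. Then the rank of Φγ(1_d) equals n1(γ), the number of levels j ∈ Fin d that are not totally depleted. -/
open Matrix

/-- The Kraus operator `A₀` of the multi-level amplitude damping channel. -/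
noncomputable def madA0 {d : ℕ} (γ : Fin d → Fin d → ℝ) : Matrix (Fin d) (Fin d) ℂ :=
  Matrix.diagonal fun j => (Real.sqrt (1 - ∑ i ∈ Finset.Iio j, γ i j) : ℂ)

/-- The multi-level amplitude damping (MAD) channel with decay rates `γ`. -/
noncomputable def madChannel {d : ℕ} (γ : Fin d → Fin d → ℝ)
    (X : Matrix (Fin d) (Fin d) ℂ) : Matrix (Fin d) (Fin d) ℂ :=
  madA0 γ * X * (madA0 γ)ᴴ + ∑ j, ∑ i ∈ Finset.Iio j, (γ i j : ℂ) •
    (Matrix.single i j 1 * X * Matrix.single j i 1)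

/-- A level `j` is totally depleted if no higher level decays into it and the total decay
rate out of it is one. -/
def totallyDepleted {d : ℕ} (γ : Fin d → Fin d → ℝ) (j : Fin d) : Prop :=
  (∑ i ∈ Finset.Iio j, γ i j = 1) ∧ ∀ k, j < k → γ j k = 0

/-- The number of levels that are not totally depleted. -/
noncomputable def madN1 {d : ℕ} (γ : Fin d → Fin d → ℝ) : ℕ :=
  Nat.card {j : Fin d // ¬ totallyDepleted γ j}

/-- The number of nonzero decay rates. -/
noncomputable def madN2 {d : ℕ} (γ : Fin d → Fin d → ℝ) : ℕ :=
  Nat.card {p : Fin d × Fin d // p.1 < p.2 ∧ γ p.1 p.2 ≠ 0}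

/-!
The image of the identity is diagonal: `A₀ A₀ᴴ` contributes the weight `1 - ∑_{i<k} γ i k`
kept at level `k`, and each jump `E i j E j i = E i i` adds `γ i j` to the lower level `i`,
so level `k` carries `(1 - ∑_{i<k} γ i k) + ∑_{j>k} γ k j`. Both summands are nonnegative,
so this entry vanishes exactly when level `k` is totally depleted, and the rank of a diagonal
matrix counts its nonzero entries.
-/

namespace MAD

variable {d : ℕ} {γ : Fin d → Fin d → ℝ}

noncomputable def population (γ : Fin d → Fin d → ℝ) (k : Fin d) : ℝ :=
  (1 - ∑ i ∈ Finset.Iio k, γ i k) + ∑ j ∈ Finset.Ioi k, γ k j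

theorem madA0_mul_conjTranspose (hγsum : ∀ j : Fin d, ∑ i ∈ Finset.Iio j, γ i j ≤ 1) :
    madA0 γ * (madA0 γ)ᴴ = diagonal fun j => ((1 - ∑ i ∈ Finset.Iio j, γ i j : ℝ) : ℂ) := by
  rw [madA0, diagonal_conjTranspose, diagonal_mul_diagonal]
  congr 1
  funext j
  rw [Pi.star_apply, Complex.star_def, Complex.conj_ofReal, ← Complex.ofReal_mul,
    Real.mul_self_sqrt (sub_nonneg.mpr (hγsum j))]

theorem sum_jumps_eq_diagonal (γ : Fin d → Fin d → ℝ) :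
    ∑ j, ∑ i ∈ Finset.Iio j, (γ i j : ℂ) • (single i j (1 : ℂ) * single j i 1) =
      diagonal fun i => ((∑ j ∈ Finset.Ioi i, γ i j : ℝ) : ℂ) := by
  simp_rw [single_mul_single_same, one_mul, smul_single, smul_eq_mul, mul_one]
  rw [Finset.sum_comm' (t' := Finset.univ) (s' := Finset.Ioi) (by simp)]
  simp_rw [← singleAddMonoidHom_apply, ← map_sum, singleAddMonoidHom_apply, ← Complex.ofReal_sum]
  exact sum_single_eq_diagonal _

theorem madChannel_one (hγsum : ∀ j : Fin d, ∑ i ∈ Finset.Iio j, γ i j ≤ 1) :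
    madChannel γ 1 = diagonal fun k => (population γ k : ℂ) := by
  rw [madChannel, Matrix.mul_one, madA0_mul_conjTranspose hγsum]
  simp_rw [Matrix.mul_one]
  rw [sum_jumps_eq_diagonal, diagonal_add]
  simp [population]

theorem population_eq_zero_iff (hγ : ∀ i j : Fin d, i < j → 0 ≤ γ i j)
    (hγsum : ∀ j : Fin d, ∑ i ∈ Finset.Iio j, γ i j ≤ 1) (k : Fin d) :
    population γ k = 0 ↔ totallyDepleted γ k := by
  have hout : ∀ j ∈ Finset.Ioi k, 0 ≤ γ k j := fun j hj => hγ k j (Finset.mem_Ioi.mp hj)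
  rw [population, add_eq_zero_iff_of_nonneg (sub_nonneg.mpr (hγsum k))
    (Finset.sum_nonneg hout), Finset.sum_eq_zero_iff_of_nonneg hout, sub_eq_zero, eq_comm]
  simp only [totallyDepleted, Finset.mem_Ioi]

end MAD

theorem stmt6_general {d : ℕ} (γ : Fin d → Fin d → ℝ)
    (hγ : ∀ i j : Fin d, i < j → 0 ≤ γ i j)
    (hγsum : ∀ j : Fin d, ∑ i ∈ Finset.Iio j, γ i j ≤ 1) :
    (madChannel γ 1).rank = madN1 γ := by
  classical
  rw [MAD.madChannel_one hγsum, rank_diagonal, madN1, Nat.card_eq_fintype_card]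
  refine Fintype.card_congr (Equiv.subtypeEquivRight fun k => ?_)
  rw [Ne, Complex.ofReal_eq_zero, MAD.population_eq_zero_iff hγ hγsum]

theorem stmt6 {d : ℕ} (hd : 1 ≤ d) (γ : Fin d → Fin d → ℝ)
    (hγ : ∀ i j : Fin d, i < j → 0 ≤ γ i j)
    (hγsum : ∀ j : Fin d, ∑ i ∈ Finset.Iio j, γ i j ≤ 1) :
    (madChannel γ 1).rank = madN1 γ :=
  stmt6_general γ hγ hγsum
end

section
/- Let Φγ be the MAD channel with decay rates γ satisfying γ i j ≥ 0 for i < j and ∑_{i<j} γ i j ≤ 1 for each j. Assume 1 + n2(γ) > n1(γ) and that for every level j with j < d − 1 that is not totally depleted there exists k > j with γ j k ≠ 0. Then rank Φγ(e eᴴ) = n1(γ), where e : Fin d → ℂ is the all-ones vector and e eᴴ = Matrix.vecMulVec e (star e). -/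
/-!
Writing `Φγ(X) = ∑ₖ Kₖ X Kₖᴴ` with the Kraus operators `A₀` and `√γᵢⱼ Eᵢⱼ`, the output on the pure
state `e eᴴ` is `∑ₖ (Kₖ e)(Kₖ e)ᴴ = V Vᴴ` for the matrix `V` with columns `Kₖ e`, so its rank is
the dimension of the span of these vectors. They are `A₀ e = ∑ᵦ √(1 - ∑ᵢ γᵢᵦ) eᵦ` and the
multiples `√γᵢⱼ eᵢ`, and their span is spanned by the basis vectors of the levels that are not
totally depleted: every such level except possibly the top one receives a nonzero decay, and the
top one is recovered from `A₀ e`.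
-/

open Matrix

open Submodule Module

section RankOne

variable {l m R : Type*}

theorem mul_vecMulVec_star_mul_conjTranspose [Fintype m] [CommRing R] [StarRing R]
    (M : Matrix l m R) (u v : m → R) :
    M * vecMulVec u (star v) * Mᴴ = vecMulVec (M *ᵥ u) (star (M *ᵥ v)) := by
  rw [mul_vecMulVec, vecMulVec_mul, star_mulVec]

theorem mul_conjTranspose_eq_sum_vecMulVec [Fintype m] [CommRing R] [StarRing R]
    (A : Matrix l m R) : A * Aᴴ = ∑ k, vecMulVec (A.col k) (star (A.col k)) := by
  ext a b
  simp [mul_apply, Matrix.sum_apply, vecMulVec_apply]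

theorem rank_sum_vecMulVec_self_star [Fintype l] [Fintype m] [Field R] [PartialOrder R]
    [StarRing R] [StarOrderedRing R] (v : m → l → R) :
    (∑ k, vecMulVec (v k) (star (v k))).rank = finrank R (span R (Set.range v)) := by
  have hv : (Matrix.of fun a k => v k a).col = v := rfl
  rw [← hv, ← mul_conjTranspose_eq_sum_vecMulVec, rank_self_mul_conjTranspose,
    rank_eq_finrank_span_cols]

theorem finrank_span_image_single_one [Fintype m] [DecidableEq m] [Field R] (s : Set m) :
    finrank R (span R ((fun i => (Pi.single i 1 : m → R)) '' s)) = Nat.card s := by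
  classical
  have hs := (Pi.linearIndependent_single_one m R).comp _ (Subtype.val_injective (p := (· ∈ s)))
  rw [Set.image_eq_range]
  exact (finrank_span_eq_card hs).trans Nat.card_eq_fintype_card.symm

end RankOne

section MAD

variable {d : ℕ} (γ : Fin d → Fin d → ℝ)

/-- Kraus operators of `madChannel γ`: `A₀` and `√γᵢⱼ Eᵢⱼ` for `i < j`; the unused indices
`some (i, j)` with `j ≤ i` carry the zero operator. -/
noncomputable def madKraus : Option (Fin d × Fin d) → Matrix (Fin d) (Fin d) ℂ
  | none => madA0 γ
  | some (i, j) => if i < j then (√(γ i j) : ℂ) • single i j 1 else 0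

theorem madChannel_eq_sum_madKraus (hγ : ∀ i j : Fin d, i < j → 0 ≤ γ i j)
    (X : Matrix (Fin d) (Fin d) ℂ) :
    madChannel γ X = ∑ k, madKraus γ k * X * (madKraus γ k)ᴴ := by
  rw [Fintype.sum_option, Fintype.sum_prod_type, Finset.sum_comm, madChannel]
  congr 1
  refine Finset.sum_congr rfl fun j _ => ?_
  rw [← Finset.filter_gt_eq_Iio, Finset.sum_filter]
  refine Finset.sum_congr rfl fun i _ => ?_
  by_cases hij : i < j
  · simp [madKraus, hij, conjTranspose_single, mul_right_comm _ (X j j), ← Complex.ofReal_mul,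
      Real.mul_self_sqrt (hγ i j hij)]
  · simp [madKraus, hij]

theorem rank_madChannel_vecMulVec (hγ : ∀ i j : Fin d, i < j → 0 ≤ γ i j) (u : Fin d → ℂ) :
    (madChannel γ (vecMulVec u (star u))).rank =
      finrank ℂ (span ℂ (Set.range fun k => madKraus γ k *ᵥ u)) := by
  open ComplexOrder in
  simp_rw [madChannel_eq_sum_madKraus γ hγ, mul_vecMulVec_star_mul_conjTranspose,
    rank_sum_vecMulVec_self_star]

theorem madKraus_none_mulVec_one :
    madKraus γ none *ᵥ 1 = ∑ b, (√(1 - ∑ i ∈ Finset.Iio b, γ i b) : ℂ) • Pi.single b 1 := by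
  ext a
  simp [madKraus, madA0, mulVec_diagonal, Finset.sum_apply, Pi.single_apply]

theorem madKraus_some_mulVec_one (i j : Fin d) :
    madKraus γ (some (i, j)) *ᵥ 1 = if i < j then (√(γ i j) : ℂ) • Pi.single i 1 else 0 := by
  ext a
  by_cases hij : i < j <;>
    simp [madKraus, hij, single_mulVec, Function.update_apply, Pi.single_apply]

theorem single_mem_span_madKraus_mulVec_one (hγ : ∀ i j : Fin d, i < j → 0 ≤ γ i j)
    {i j : Fin d} (hij : i < j) (hγij : γ i j ≠ 0) :
    Pi.single i 1 ∈ span ℂ (Set.range fun k => madKraus γ k *ᵥ 1) := by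
  have hsqrt : (√(γ i j) : ℂ) ≠ 0 :=
    Complex.ofReal_ne_zero.2 (Real.sqrt_pos.2 ((hγ i j hij).lt_of_ne' hγij)).ne'
  have hcol := madKraus_some_mulVec_one γ i j
  rw [if_pos hij] at hcol
  rw [← smul_mem_iff _ hsqrt, ← hcol]
  exact subset_span ⟨_, rfl⟩

theorem span_madKraus_mulVec_one_le :
    span ℂ (Set.range fun k => madKraus γ k *ᵥ 1) ≤
      span ℂ ((fun a => Pi.single a 1) '' {a | ¬ totallyDepleted γ a}) := by
  rw [span_le]
  rintro _ ⟨_ | ⟨i, j⟩, rfl⟩ <;> dsimp only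
  · rw [madKraus_none_mulVec_one]
    refine sum_mem fun b _ => ?_
    by_cases hb : totallyDepleted γ b
    · simp [hb.1]
    · exact smul_mem _ _ (subset_span ⟨b, hb, rfl⟩)
  · rw [madKraus_some_mulVec_one]
    split_ifs with hij
    · by_cases hγij : γ i j = 0
      · simp [hγij]
      · exact smul_mem _ _ (subset_span ⟨i, fun hi => hγij (hi.2 j hij), rfl⟩)
    · exact zero_mem _

theorem single_mem_span_madKraus_mulVec_one_of_not_totallyDepleted
    (hγ : ∀ i j : Fin d, i < j → 0 ≤ γ i j)
    (hγsum : ∀ j : Fin d, ∑ i ∈ Finset.Iio j, γ i j ≤ 1)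
    (hrecv : ∀ j : Fin d, (j : ℕ) < d - 1 → ¬ totallyDepleted γ j →
      ∃ k : Fin d, j < k ∧ γ j k ≠ 0)
    {a : Fin d} (ha : ¬ totallyDepleted γ a) :
    Pi.single a 1 ∈ span ℂ (Set.range fun k => madKraus γ k *ᵥ 1) := by
  set W := span ℂ (Set.range fun k => madKraus γ k *ᵥ 1)
  set c : Fin d → ℂ := fun b => √(1 - ∑ i ∈ Finset.Iio b, γ i b)
  by_cases hrec : ∃ k, a < k ∧ γ a k ≠ 0
  · obtain ⟨k, hak, hγak⟩ := hrec
    exact single_mem_span_madKraus_mulVec_one γ hγ hak hγak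
  push Not at hrec
  -- `a` is the top level by `hrecv`; all other terms of `A₀ e = ∑ c b • e_b` lie in `W`.
  have hlt : ∀ b, b ≠ a → (b : ℕ) < d - 1 := by
    intro b hb
    have hb' : (b : ℕ) ≤ d - 1 := Nat.le_sub_one_of_lt b.isLt
    have ha' : ¬ (a : ℕ) < d - 1 := fun h => by
      obtain ⟨k, hak, hγak⟩ := hrecv a h ha
      exact hγak (hrec k hak)
    omega
  have hothers : ∀ b ∈ Finset.univ.erase a, c b • Pi.single b 1 ∈ W := by
    intro b hb
    by_cases hdep : totallyDepleted γ b
    · simp [c, hdep.1]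
    · obtain ⟨k, hbk, hγbk⟩ := hrecv b (hlt b (Finset.ne_of_mem_erase hb)) hdep
      exact smul_mem _ _ (single_mem_span_madKraus_mulVec_one γ hγ hbk hγbk)
  have hca : c a ≠ 0 := by
    have hsum : ∑ i ∈ Finset.Iio a, γ i a < 1 := (hγsum a).lt_of_ne fun h => ha ⟨h, hrec⟩
    exact Complex.ofReal_ne_zero.2 (Real.sqrt_pos.2 (sub_pos.2 hsum)).ne'
  have hnone : madKraus γ none *ᵥ 1 ∈ W := subset_span ⟨none, rfl⟩
  rw [madKraus_none_mulVec_one, ← Finset.add_sum_erase _ _ (Finset.mem_univ a)] at hnone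
  exact (smul_mem_iff _ hca).1 ((W.add_mem_iff_left (sum_mem hothers)).1 hnone)

theorem span_madKraus_mulVec_one
    (hγ : ∀ i j : Fin d, i < j → 0 ≤ γ i j)
    (hγsum : ∀ j : Fin d, ∑ i ∈ Finset.Iio j, γ i j ≤ 1)
    (hrecv : ∀ j : Fin d, (j : ℕ) < d - 1 → ¬ totallyDepleted γ j →
      ∃ k : Fin d, j < k ∧ γ j k ≠ 0) :
    span ℂ (Set.range fun k => madKraus γ k *ᵥ 1) =
      span ℂ ((fun a => Pi.single a 1) '' {a | ¬ totallyDepleted γ a}) := by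
  refine (span_madKraus_mulVec_one_le γ).antisymm (span_le.2 ?_)
  rintro _ ⟨a, ha, rfl⟩
  exact single_mem_span_madKraus_mulVec_one_of_not_totallyDepleted γ hγ hγsum hrecv ha

end MAD

theorem stmt7_general {d : ℕ} (γ : Fin d → Fin d → ℝ)
    (hγ : ∀ i j : Fin d, i < j → 0 ≤ γ i j)
    (hγsum : ∀ j : Fin d, ∑ i ∈ Finset.Iio j, γ i j ≤ 1)
    (hrecv : ∀ j : Fin d, (j : ℕ) < d - 1 → ¬ totallyDepleted γ j →
      ∃ k : Fin d, j < k ∧ γ j k ≠ 0) :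
    (madChannel γ (vecMulVec (fun _ => 1) (star fun _ => (1 : ℂ)))).rank = madN1 γ := by
  calc _ = finrank ℂ (span ℂ (Set.range fun k => madKraus γ k *ᵥ 1)) :=
        rank_madChannel_vecMulVec γ hγ 1
    _ = madN1 γ := by
        rw [span_madKraus_mulVec_one γ hγ hγsum hrecv, finrank_span_image_single_one]
        rfl

theorem stmt7 {d : ℕ} (hd : 1 ≤ d) (γ : Fin d → Fin d → ℝ)
    (hγ : ∀ i j : Fin d, i < j → 0 ≤ γ i j)
    (hγsum : ∀ j : Fin d, ∑ i ∈ Finset.Iio j, γ i j ≤ 1)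
    (hn : 1 + madN2 γ > madN1 γ)
    (hrecv : ∀ j : Fin d, (j : ℕ) < d - 1 → ¬ totallyDepleted γ j →
      ∃ k : Fin d, j < k ∧ γ j k ≠ 0) :
    (madChannel γ (vecMulVec (fun _ => 1) (star fun _ => (1 : ℂ)))).rank = madN1 γ :=
  stmt7_general γ hγ hγsum hrecv
end

section
/- Let Φγ be the MAD channel with decay rates γ satisfying γ i j ≥ 0 for i < j and ∑_{i<j} γ i j ≤ 1 for each j. Assume 1 + n2(γ) < n1(γ) and that every level j with j < d − 1 that is not totally depleted receives a decay contribution from at most one higher level, i.e. the number of k > j with γ j k ≠ 0 is at most 1. Then rank Φγ(e eᴴ) = 1 + n2(γ), where e : Fin d → ℂ is the all-ones vector and e eᴴ = Matrix.vecMulVec e (star e). -/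
open Matrix

/-!
On the all-ones state the channel produces `a aᴴ + diagonal D`, where `a j = √(1 - ∑_{i<j} γ i j)`
and `D j = ∑_{k>j} γ j k` is the total inflow into level `j`. If some level `j₀` has `a j₀ ≠ 0`
and `D j₀ = 0`, the range of `a aᴴ + diagonal D` is spanned by `a` and the basis vectors `e_j`
with `D j ≠ 0`, and these are linearly independent because `a` does not vanish at `j₀`; so the
rank is `1 + #{j | D j ≠ 0}`. Since a receiving level receives from exactly one higher level,
`#{j | D j ≠ 0} = n₂`. Finally a level that is not totally depleted but has `D j = 0` has
`a j ≠ 0`, and `n₂ < n₁` leaves room for one.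
-/

section RankOneAddDiagonal

variable {K n : Type*} [Field K] [Fintype n] [DecidableEq n]

theorem vecMulVec_add_diagonal_mulVec (a b D v : n → K) :
    (vecMulVec a b + diagonal D) *ᵥ v = (b ⬝ᵥ v) • a + D * v := by
  ext i
  simp [add_mulVec, vecMulVec_mulVec, mulVec_diagonal]

theorem vecMulVec_add_diagonal_mulVec_single (a b D : n → K) (j : n) :
    (vecMulVec a b + diagonal D) *ᵥ Pi.single j 1 = b j • a + Pi.single j (D j) := by
  rw [vecMulVec_add_diagonal_mulVec, dotProduct_single_one, ← Pi.single_mul_right, mul_one]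

theorem range_mulVecLin_vecMulVec_add_diagonal {a b D : n → K} {j₀ : n} (hb : b j₀ ≠ 0)
    (hD : D j₀ = 0) :
    LinearMap.range (vecMulVec a b + diagonal D).mulVecLin =
      Submodule.span K (insert a (Set.range fun j : {j // D j ≠ 0} => Pi.single j.1 1)) := by
  set M := vecMulVec a b + diagonal D
  have ha : a ∈ LinearMap.range M.mulVecLin :=
    ⟨(b j₀)⁻¹ • Pi.single j₀ 1, by
      rw [map_smul, mulVecLin_apply, vecMulVec_add_diagonal_mulVec_single, hD, Pi.single_zero,
        add_zero, smul_smul, inv_mul_cancel₀ hb, one_smul]⟩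
  apply le_antisymm
  · rintro _ ⟨v, rfl⟩
    rw [mulVecLin_apply, vecMulVec_add_diagonal_mulVec, ← Finset.univ_sum_single (D * v)]
    refine add_mem (Submodule.smul_mem _ _ (Submodule.subset_span (Set.mem_insert a _)))
      (Submodule.sum_mem _ fun j _ => ?_)
    by_cases hj : D j = 0
    · simp [hj]
    · rw [← mul_one ((D * v) j), ← smul_eq_mul, Pi.single_smul]
      exact Submodule.smul_mem _ _
        (Submodule.subset_span (Set.mem_insert_of_mem _ ⟨⟨j, hj⟩, rfl⟩))
  · rw [Submodule.span_le, Set.insert_subset_iff]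
    refine ⟨ha, ?_⟩
    rintro _ ⟨⟨j, hj⟩, rfl⟩
    have hcol : Pi.single j 1 = (D j)⁻¹ • (M *ᵥ Pi.single j 1 - b j • a) := by
      rw [vecMulVec_add_diagonal_mulVec_single, add_sub_cancel_left, ← Pi.single_smul,
        smul_eq_mul, inv_mul_cancel₀ hj]
    show Pi.single j 1 ∈ _
    rw [hcol]
    exact Submodule.smul_mem _ _ (sub_mem ⟨_, rfl⟩ (Submodule.smul_mem _ _ ha))

theorem rank_vecMulVec_add_diagonal {a b D : n → K} {j₀ : n} (ha : a j₀ ≠ 0) (hb : b j₀ ≠ 0)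
    (hD : D j₀ = 0) :
    (vecMulVec a b + diagonal D).rank = Nat.card {j // D j ≠ 0} + 1 := by
  classical
  let v : {j // D j ≠ 0} → n → K := fun j => Pi.single j.1 1
  have hv : LinearIndependent K v :=
    (Pi.linearIndependent_single_one n K).comp _ Subtype.val_injective
  have hav : a ∉ Submodule.span K (Set.range v) := by
    have hspan : Submodule.span K (Set.range v) ≤ LinearMap.ker (LinearMap.proj j₀) := by
      rw [Submodule.span_le]
      rintro _ ⟨⟨j, hj⟩, rfl⟩
      simp [v, show j₀ ≠ j from fun h => hj (h ▸ hD)]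
    exact fun h => ha (hspan h)
  rw [rank, range_mulVecLin_vecMulVec_add_diagonal hb hD,
    show insert a (Set.range v) = Set.range fun o => Option.casesOn' o a v from
      (Option.range_eq fun o => Option.casesOn' o a v).symm,
    finrank_span_eq_card (hv.option hav), Fintype.card_option, Nat.card_eq_fintype_card]

end RankOneAddDiagonal

noncomputable def madSurvivalAmp {d : ℕ} (γ : Fin d → Fin d → ℝ) (j : Fin d) : ℝ :=
  Real.sqrt (1 - ∑ i ∈ Finset.Iio j, γ i j)

def madInflow {d : ℕ} (γ : Fin d → Fin d → ℝ) (j : Fin d) : ℝ :=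
  ∑ k ∈ Finset.Ioi j, γ j k

section MadChannel

variable {d : ℕ} (γ : Fin d → Fin d → ℝ)

theorem madA0_mul_vecMulVec_mul (v : Fin d → ℂ) :
    madA0 γ * vecMulVec v (star v) * (madA0 γ)ᴴ =
      vecMulVec (madA0 γ *ᵥ v) (star (madA0 γ *ᵥ v)) := by
  rw [mul_vecMulVec, vecMulVec_mul, star_mulVec]

theorem sum_single_mul_vecMulVec_one_mul_single :
    ∑ j, ∑ i ∈ Finset.Iio j, (γ i j : ℂ) •
      (single i j 1 * vecMulVec (fun _ => 1) (star fun _ => (1 : ℂ)) * single j i 1) =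
    diagonal fun i => (madInflow γ i : ℂ) := by
  simp only [single_mul_mul_single, vecMulVec_apply, Pi.star_apply, star_one, mul_one,
    smul_single, smul_eq_mul]
  rw [Finset.sum_comm' (t' := Finset.univ) (s' := Finset.Ioi) (by simp), ← sum_single_eq_diagonal]
  refine Finset.sum_congr rfl fun i _ => ?_
  rw [madInflow, Complex.ofReal_sum]
  exact (map_sum (singleAddMonoidHom (α := ℂ) i i) _ _).symm

theorem madChannel_vecMulVec_one :
    madChannel γ (vecMulVec (fun _ => 1) (star fun _ => (1 : ℂ))) =
      vecMulVec (fun j => (madSurvivalAmp γ j : ℂ)) (star fun j => (madSurvivalAmp γ j : ℂ)) +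
        diagonal fun j => (madInflow γ j : ℂ) := by
  rw [madChannel, madA0_mul_vecMulVec_mul, sum_single_mul_vecMulVec_one_mul_single]
  congr <;> ext j <;> simp [madA0, madSurvivalAmp, mulVec_diagonal]

end MadChannel

section Counting

variable {d : ℕ} {γ : Fin d → Fin d → ℝ}

theorem madInflow_eq_zero_iff (hγ : ∀ i j : Fin d, i < j → 0 ≤ γ i j) (j : Fin d) :
    madInflow γ j = 0 ↔ ∀ k, j < k → γ j k = 0 := by
  simp only [madInflow,
    Finset.sum_eq_zero_iff_of_nonneg fun k hk => hγ j k (Finset.mem_Ioi.mp hk), Finset.mem_Ioi]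

theorem madSurvivalAmp_eq_zero_iff {j : Fin d} (hγsum : ∑ i ∈ Finset.Iio j, γ i j ≤ 1) :
    madSurvivalAmp γ j = 0 ↔ ∑ i ∈ Finset.Iio j, γ i j = 1 := by
  rw [madSurvivalAmp, Real.sqrt_eq_zero', sub_nonpos]
  exact ⟨hγsum.antisymm, Eq.ge⟩

theorem totallyDepleted_iff (hγ : ∀ i j : Fin d, i < j → 0 ≤ γ i j) {j : Fin d}
    (hγsum : ∑ i ∈ Finset.Iio j, γ i j ≤ 1) :
    totallyDepleted γ j ↔ madSurvivalAmp γ j = 0 ∧ madInflow γ j = 0 := by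
  rw [totallyDepleted, madSurvivalAmp_eq_zero_iff hγsum, madInflow_eq_zero_iff hγ]

theorem card_madInflow_ne_zero (hγ : ∀ i j : Fin d, i < j → 0 ≤ γ i j)
    (hrecv : ∀ j : Fin d, (j : ℕ) < d - 1 → ¬ totallyDepleted γ j →
      Nat.card {k : Fin d // j < k ∧ γ j k ≠ 0} ≤ 1) :
    Nat.card {j // madInflow γ j ≠ 0} = madN2 γ := by
  have hinflow (j : Fin d) : madInflow γ j ≠ 0 ↔ ∃ k, j < k ∧ γ j k ≠ 0 := by
    simp only [ne_eq, madInflow_eq_zero_iff hγ, not_forall, exists_prop]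
  refine (Nat.card_eq_of_bijective
    (fun p : {p : Fin d × Fin d // p.1 < p.2 ∧ γ p.1 p.2 ≠ 0} =>
      (⟨p.1.1, (hinflow _).2 ⟨_, p.2⟩⟩ : {j // madInflow γ j ≠ 0})) ⟨?_, ?_⟩).symm
  · rintro ⟨⟨j, k₁⟩, hjk₁, hγ₁⟩ ⟨⟨j', k₂⟩, hjk₂, hγ₂⟩ hjj'
    obtain rfl : j = j' := congrArg Subtype.val hjj'
    have hj : (j : ℕ) < d - 1 := by have : (j : ℕ) < k₁ := hjk₁; omega
    have := Finite.card_le_one_iff_subsingleton.mp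
      (hrecv j hj fun hdep => hγ₁ (hdep.2 k₁ hjk₁))
    obtain rfl : k₁ = k₂ :=
      congrArg Subtype.val (Subsingleton.elim (⟨k₁, hjk₁, hγ₁⟩ : {k // j < k ∧ γ j k ≠ 0})
        ⟨k₂, hjk₂, hγ₂⟩)
    rfl
  · rintro ⟨j, hj⟩
    obtain ⟨k, hjk, hγk⟩ := (hinflow j).1 hj
    exact ⟨⟨(j, k), hjk, hγk⟩, rfl⟩

theorem exists_madSurvivalAmp_ne_zero_madInflow_eq_zero
    (hγ : ∀ i j : Fin d, i < j → 0 ≤ γ i j) (hγsum : ∀ j : Fin d, ∑ i ∈ Finset.Iio j, γ i j ≤ 1)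
    (h : Nat.card {j // madInflow γ j ≠ 0} < madN1 γ) :
    ∃ j, madSurvivalAmp γ j ≠ 0 ∧ madInflow γ j = 0 := by
  by_contra! hno
  have hsub (j : Fin d) (hj : ¬ totallyDepleted γ j) : madInflow γ j ≠ 0 := fun h0 =>
    hj ((totallyDepleted_iff hγ (hγsum j)).2 ⟨not_not.1 fun ha => hno j ha h0, h0⟩)
  exact h.not_ge
    (Nat.card_le_card_of_injective (Subtype.map id hsub)
      (Subtype.map_injective (f := id) hsub Function.injective_id))

end Counting

theorem stmt8_general {d : ℕ} (γ : Fin d → Fin d → ℝ)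
    (hγ : ∀ i j : Fin d, i < j → 0 ≤ γ i j)
    (hγsum : ∀ j : Fin d, ∑ i ∈ Finset.Iio j, γ i j ≤ 1)
    (hn : 1 + madN2 γ < madN1 γ)
    (hrecv : ∀ j : Fin d, (j : ℕ) < d - 1 → ¬ totallyDepleted γ j →
      Nat.card {k : Fin d // j < k ∧ γ j k ≠ 0} ≤ 1) :
    (madChannel γ (vecMulVec (fun _ => 1) (star fun _ => (1 : ℂ)))).rank = 1 + madN2 γ := by
  have hcard := card_madInflow_ne_zero hγ hrecv
  obtain ⟨j₀, hamp, hinflow⟩ :=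
    exists_madSurvivalAmp_ne_zero_madInflow_eq_zero hγ hγsum (by omega)
  rw [madChannel_vecMulVec_one, rank_vecMulVec_add_diagonal (j₀ := j₀)]
  · rw [← hcard, add_comm]
    simp only [ne_eq, Complex.ofReal_eq_zero]
  all_goals simp [hamp, hinflow]

theorem stmt8 {d : ℕ} (hd : 1 ≤ d) (γ : Fin d → Fin d → ℝ)
    (hγ : ∀ i j : Fin d, i < j → 0 ≤ γ i j)
    (hγsum : ∀ j : Fin d, ∑ i ∈ Finset.Iio j, γ i j ≤ 1)
    (hn : 1 + madN2 γ < madN1 γ)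
    (hrecv : ∀ j : Fin d, (j : ℕ) < d - 1 → ¬ totallyDepleted γ j →
      Nat.card {k : Fin d // j < k ∧ γ j k ≠ 0} ≤ 1) :
    (madChannel γ (vecMulVec (fun _ => 1) (star fun _ => (1 : ℂ)))).rank = 1 + madN2 γ :=
  stmt8_general γ hγ hγsum hn hrecv
end

section
/- Let A, B : Matrix (Fin d) (Fin d) ℂ with A having nonnegative real entries, B Hermitian, B i i = A i i for all i, and A i j · A j i ≥ |B i j|² for all i, j. Let J : Matrix (Fin d × Fin d) (Fin d × Fin d) ℂ be the Choi matrix of the DUC map, defined by J (i,j) (i,j) = A i j for all i,j, J (i,j) (j,i) = B i j for i ≠ j, and all other entries 0. Then rank J = #{i : A i i ≠ 0} + ∑_{i<j} rank of the 2×2 matrix [[A i j, B i j],[B j i, A j i]]. -/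
/-!
`ducChoi A B` has entry `(p, q)` zero unless `{p.1, p.2} = {q.1, q.2}` as unordered pairs, so
after regrouping the indices by the fibres of `p ↦ s(p.1, p.2)` it is block diagonal over
`Sym2 (Fin d)`. The block of `s(i, i)` is the `1 × 1` matrix `[A i i]` and the block of `s(i, j)`,
`i < j`, is `!![A i j, B i j; B j i, A j i]`; rank is additive over diagonal blocks.
-/

open Matrix

/-- The Choi matrix of the DUC map associated with matrices `A`, `B`. -/
def ducChoi {d : ℕ} (A B : Matrix (Fin d) (Fin d) ℂ) :
    Matrix (Fin d × Fin d) (Fin d × Fin d) ℂ :=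
  Matrix.of fun p q =>
    if q = p then A p.1 p.2
    else if q = (p.2, p.1) then B p.1 p.2
    else 0

theorem LinearMap.finrank_range_piMap {K ι : Type*} [Field K] [Fintype ι] {φ ψ : ι → Type*}
    [∀ i, AddCommGroup (φ i)] [∀ i, Module K (φ i)] [∀ i, AddCommGroup (ψ i)]
    [∀ i, Module K (ψ i)] [∀ i, FiniteDimensional K (ψ i)] (f : ∀ i, φ i →ₗ[K] ψ i) :
    Module.finrank K (range (piMap f)) = ∑ i, Module.finrank K (range (f i)) := by
  have hfactor : piMap f = piMap (fun i => (range (f i)).subtype) ∘ₗ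
      piMap (fun i => (f i).rangeRestrict) := rfl
  have hsurj : range (piMap fun i => (f i).rangeRestrict) = ⊤ :=
    range_eq_top.2 (Function.Surjective.piMap fun i => (f i).surjective_rangeRestrict)
  have hinj : Function.Injective (piMap fun i => (range (f i)).subtype) :=
    Function.Injective.piMap fun i => Subtype.val_injective
  rw [hfactor, range_comp_of_range_eq_top _ hsurj, finrank_range_of_inj hinj,
    Module.finrank_pi_fintype]

namespace Matrix

theorem rank_blockDiagonal' {K ι : Type*} [Field K] [Fintype ι] [DecidableEq ι]
    {m n : ι → Type*} [∀ i, Fintype (m i)] [∀ i, Fintype (n i)] [∀ i, DecidableEq (n i)]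
    (M : ∀ i, Matrix (m i) (n i) K) :
    (blockDiagonal' M).rank = ∑ i, (M i).rank := by
  let e := LinearEquiv.piCurry K (fun i (_ : m i) => K)
  let e' := LinearEquiv.piCurry K (fun i (_ : n i) => K)
  have hconj : (blockDiagonal' M).mulVecLin =
      e.symm.toLinearMap ∘ₗ LinearMap.piMap (fun i => (M i).mulVecLin) ∘ₗ
        e'.toLinearMap := by
    refine LinearMap.ext fun x => funext fun ⟨i, a⟩ => ?_
    simp [e, e', mulVec, dotProduct, blockDiagonal'_apply, Fintype.sum_sigma, Sigma.uncurry,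
      Sigma.curry]
  rw [rank, hconj, LinearMap.range_comp,
    LinearMap.range_comp_of_range_eq_top _ (LinearEquiv.range e'), LinearEquiv.finrank_map_eq,
    LinearMap.finrank_range_piMap]
  rfl

theorem rank_eq_sum_rank_submatrix_fiber {K ι κ : Type*} [Field K] [Fintype ι]
    [DecidableEq ι] [Fintype κ] [DecidableEq κ] (f : ι → κ) (M : Matrix ι ι K)
    (hM : ∀ p q, f p ≠ f q → M p q = 0) :
    M.rank = ∑ k, (M.submatrix (fun p : {p // f p = k} => p.1)
      (fun p : {p // f p = k} => p.1)).rank := by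
  rw [← rank_submatrix M (Equiv.sigmaFiberEquiv f) (Equiv.sigmaFiberEquiv f),
    ← rank_blockDiagonal']
  congr 1
  ext ⟨k, p⟩ ⟨l, q⟩
  by_cases hkl : k = l
  · subst hkl
    simp [blockDiagonal'_apply_eq]
  · rw [blockDiagonal'_apply_ne _ _ _ hkl]
    exact hM p q (by rw [p.2, q.2]; exact hkl)

theorem rank_of_unique {K n : Type*} [Field K] [DecidableEq K] [Fintype n] [Unique n]
    (M : Matrix n n K) :
    M.rank = if M default default ≠ 0 then 1 else 0 := by
  split_ifs with h
  · rw [rank_of_isUnit M ((isUnit_iff_isUnit_det M).2 (by simpa [det_unique] using h))]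
    exact Fintype.card_unique
  · rw [show M = 0 from ext fun i j => by
      rw [Subsingleton.elim i default, Subsingleton.elim j default]; exact not_not.1 h]
    exact rank_zero

end Matrix

theorem Fintype.sum_sym2 {α M : Type*} [LinearOrder α] [Fintype α] [LocallyFiniteOrderBot α]
    [AddCommMonoid M] (g : Sym2 α → M) :
    ∑ z, g z = ∑ i, g s(i, i) + ∑ j, ∑ i ∈ Finset.Iio j, g s(i, j) := by
  calc ∑ z, g z = ∑ p : {p : α × α // p.1 ≤ p.2}, g s(p.1.1, p.1.2) :=
        (Sym2.sortEquiv.symm.sum_comp g).symm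
    _ = ∑ j, ∑ i ∈ Finset.Iic j, g s(i, j) := by
        rw [← Finset.subtype_univ,
          Finset.sum_subtype_eq_sum_filter (fun p : α × α => g s(p.1, p.2)), Finset.sum_filter,
          Fintype.sum_prod_type, Finset.sum_comm]
        simp only [← Finset.sum_filter, Finset.filter_ge_eq_Iic]
    _ = _ := by simp only [Finset.Iic_eq_cons_Iio, Finset.sum_cons, Finset.sum_add_distrib]

namespace Sym2

variable {α : Type*}

instance uniqueFiberDiag (i : α) : Unique {p : α × α // s(p.1, p.2) = s(i, i)} where
  default := ⟨(i, i), rfl⟩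
  uniq p := Subtype.ext <| by
    obtain h | h := (Sym2.mk_eq_mk_iff (q := (i, i))).1 p.2 <;> exact h

noncomputable def fiberEquivOfNe {i j : α} (h : i ≠ j) :
    Fin 2 ≃ {p : α × α // s(p.1, p.2) = s(i, j)} :=
  Equiv.ofBijective ![⟨(i, j), rfl⟩, ⟨(j, i), Sym2.eq_swap⟩] <| by
    refine ⟨fun k l hkl => ?_, fun ⟨p, hp⟩ => ?_⟩
    · fin_cases k <;> fin_cases l <;> simp_all
    · obtain rfl | rfl := (Sym2.mk_eq_mk_iff (q := (i, j))).1 hp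
      exacts [⟨0, rfl⟩, ⟨1, rfl⟩]

@[simp]
theorem coe_fiberEquivOfNe_zero {i j : α} (h : i ≠ j) :
    (fiberEquivOfNe h 0 : α × α) = (i, j) :=
  rfl

@[simp]
theorem coe_fiberEquivOfNe_one {i j : α} (h : i ≠ j) :
    (fiberEquivOfNe h 1 : α × α) = (j, i) :=
  rfl

end Sym2

section

variable {d : ℕ} (A B : Matrix (Fin d) (Fin d) ℂ)

theorem ducChoi_apply_eq_zero_of_mk_ne {p q : Fin d × Fin d} (h : s(p.1, p.2) ≠ s(q.1, q.2)) :
    ducChoi A B p q = 0 := by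
  rw [Ne, Sym2.mk_eq_mk_iff, not_or] at h
  rw [ducChoi, of_apply, if_neg (Ne.symm h.1), if_neg fun hq => h.2 (by rw [hq]; rfl)]

theorem rank_ducChoi_fiber_diag (i : Fin d) :
    ((ducChoi A B).submatrix (fun p : {p // s(p.1, p.2) = s(i, i)} => p.1)
      (fun p : {p // s(p.1, p.2) = s(i, i)} => p.1)).rank = if A i i ≠ 0 then 1 else 0 := by
  rw [Matrix.rank_of_unique]
  simp [ducChoi, default]

theorem rank_ducChoi_fiber_of_ne {i j : Fin d} (h : i ≠ j) :
    ((ducChoi A B).submatrix (fun p : {p // s(p.1, p.2) = s(i, j)} => p.1)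
      (fun p : {p // s(p.1, p.2) = s(i, j)} => p.1)).rank =
      (!![A i j, B i j; B j i, A j i] : Matrix (Fin 2) (Fin 2) ℂ).rank := by
  rw [← rank_submatrix _ (Sym2.fiberEquivOfNe h) (Sym2.fiberEquivOfNe h)]
  congr 1
  ext k l
  fin_cases k <;> fin_cases l <;> simp [ducChoi, h, h.symm]

end

theorem stmt9_general {d : ℕ} (A B : Matrix (Fin d) (Fin d) ℂ) :
    (ducChoi A B).rank =
      Nat.card {i : Fin d // A i i ≠ 0} +
        ∑ j : Fin d, ∑ i ∈ Finset.Iio j,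
          (!![A i j, B i j; B j i, A j i] : Matrix (Fin 2) (Fin 2) ℂ).rank := by
  rw [rank_eq_sum_rank_submatrix_fiber (fun p => s(p.1, p.2)) _
      fun _ _ => ducChoi_apply_eq_zero_of_mk_ne A B, Fintype.sum_sym2, Nat.card_eq_fintype_card,
    Fintype.card_subtype, Finset.card_filter]
  congr 1
  · exact Finset.sum_congr rfl fun i _ => rank_ducChoi_fiber_diag A B i
  · exact Finset.sum_congr rfl fun j _ => Finset.sum_congr rfl fun i hi =>
      rank_ducChoi_fiber_of_ne A B (Finset.mem_Iio.1 hi).ne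

theorem stmt9 {d : ℕ} (A B : Matrix (Fin d) (Fin d) ℂ)
    (hA : ∀ i j, 0 ≤ (A i j).re ∧ (A i j).im = 0)
    (hB : B.IsHermitian)
    (hdiag : ∀ i, B i i = A i i)
    (hAB : ∀ i j, Complex.normSq (B i j) ≤ (A i j).re * (A j i).re) :
    (ducChoi A B).rank =
      Nat.card {i : Fin d // A i i ≠ 0} +
        ∑ j : Fin d, ∑ i ∈ Finset.Iio j,
          (!![A i j, B i j; B j i, A j i] : Matrix (Fin 2) (Fin 2) ℂ).rank :=
  stmt9_general A B
end

section
/- Let A, B : Matrix (Fin d) (Fin d) ℂ with A having nonnegative real entries, B positive semidefinite, and B i i = A i i for all i. Let J : Matrix (Fin d × Fin d) (Fin d × Fin d) ℂ be the Choi matrix of the CDUC map, defined by J (i,j) (i,j) = A i j for all i,j, J (i,i) (k,k) = B i k for i ≠ k, and all other entries 0. Then rank J = rank B + #{(i,j) : i ≠ j and A i j ≠ 0}. -/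
open Matrix Module

lemma finrank_submodule_prod {K M M' : Type*} [Field K] [AddCommGroup M] [Module K M]
    [AddCommGroup M'] [Module K M'] [FiniteDimensional K M] [FiniteDimensional K M']
    (p : Submodule K M) (q : Submodule K M') :
    finrank K (p.prod q) = finrank K p + finrank K q := by
  have e : (p.prod q) ≃ₗ[K] p × q :=
    { toFun := fun x => (⟨x.1.1, x.2.1⟩, ⟨x.1.2, x.2.2⟩)
      invFun := fun y => ⟨(y.1.1, y.2.1), ⟨y.1.2, y.2.2⟩⟩
      left_inv := fun x => rfl
      right_inv := fun y => rfl
      map_add' := fun x y => rfl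
      map_smul' := fun c x => rfl }
  rw [e.finrank_eq, Module.finrank_prod]

lemma range_prodMap {K M M' N N' : Type*} [Field K] [AddCommGroup M] [Module K M]
    [AddCommGroup M'] [Module K M'] [AddCommGroup N] [Module K N] [AddCommGroup N'] [Module K N']
    (f : M →ₗ[K] N) (g : M' →ₗ[K] N') :
    LinearMap.range (f.prodMap g) = (LinearMap.range f).prod (LinearMap.range g) := by
  ext ⟨x, y⟩
  constructor
  · rintro ⟨⟨a, b⟩, h⟩
    rw [LinearMap.prodMap_apply] at h
    exact ⟨⟨a, congrArg Prod.fst h⟩, ⟨b, congrArg Prod.snd h⟩⟩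
  · rintro ⟨⟨a, ha⟩, ⟨b, hb⟩⟩
    exact ⟨(a, b), Prod.ext ha hb⟩

lemma rank_fromBlocks_zero {n m : Type*} [Fintype n] [Fintype m] [DecidableEq n] [DecidableEq m]
    (B : Matrix n n ℂ) (D : Matrix m m ℂ) :
    (Matrix.fromBlocks B 0 0 D).rank = B.rank + D.rank := by
  classical
  let e := LinearEquiv.sumArrowLequivProdArrow n m ℂ ℂ
  have hcomm : (Matrix.fromBlocks B 0 0 D).mulVecLin =
      e.symm.toLinearMap ∘ₗ (B.mulVecLin.prodMap D.mulVecLin) ∘ₗ e.toLinearMap := by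
    apply LinearMap.ext; intro x
    have hx : x = Sum.elim (x ∘ Sum.inl) (x ∘ Sum.inr) := by
      funext i; cases i <;> rfl
    rw [LinearMap.comp_apply, LinearMap.comp_apply]
    conv_lhs => rw [hx]
    simp [e, Matrix.mulVecLin_apply, Matrix.fromBlocks_mulVec,
      LinearEquiv.sumArrowLequivProdArrow, Equiv.sumArrowEquivProdArrow,
      Sum.elim_comp_inl_inr]
  rw [Matrix.rank, hcomm, Matrix.rank, Matrix.rank]
  rw [LinearMap.range_comp,
    LinearMap.range_comp_of_range_eq_top _ (LinearEquiv.range e), range_prodMap,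
    LinearEquiv.finrank_map_eq]
  exact finrank_submodule_prod _ _

open scoped ComplexOrder

/-- The Choi matrix of the CDUC map associated with matrices `A`, `B`. -/
def cducChoi {d : ℕ} (A B : Matrix (Fin d) (Fin d) ℂ) :
    Matrix (Fin d × Fin d) (Fin d × Fin d) ℂ :=
  Matrix.of fun p q =>
    if q = p then A p.1 p.2
    else if p.1 = p.2 ∧ q.1 = q.2 then B p.1 q.1
    else 0

theorem stmt10 {d : ℕ} (A B : Matrix (Fin d) (Fin d) ℂ)
    (hA : ∀ i j, 0 ≤ (A i j).re ∧ (A i j).im = 0)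
    (hB : B.PosSemidef)
    (hdiag : ∀ i, B i i = A i i) :
    (cducChoi A B).rank =
      B.rank + Nat.card {p : Fin d × Fin d // p.1 ≠ p.2 ∧ A p.1 p.2 ≠ 0} := by
  classical
  set T := {p : Fin d × Fin d // p.1 ≠ p.2}
  let diag : Fin d ≃ {p : Fin d × Fin d // p.1 = p.2} :=
    { toFun := fun i => ⟨(i, i), rfl⟩
      invFun := fun p => p.1.1
      left_inv := fun i => rfl
      right_inv := fun p => by
        obtain ⟨⟨a, b⟩, h : a = b⟩ := p
        subst h
        rfl }
  let e : (Fin d ⊕ T) ≃ (Fin d × Fin d) :=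
    (Equiv.sumCongr diag (Equiv.refl T)).trans
      (Equiv.sumCompl fun p : Fin d × Fin d => p.1 = p.2)
  have he1 : ∀ i : Fin d, e (Sum.inl i) = (i, i) := fun _ => rfl
  have he2 : ∀ q : T, e (Sum.inr q) = q.1 := fun _ => rfl
  have key : (cducChoi A B).submatrix e e =
      Matrix.fromBlocks B 0 0 (Matrix.diagonal fun q : T => A q.1.1 q.1.2) := by
    ext i j
    rw [Matrix.submatrix_apply]
    cases i with
    | inl i =>
      cases j with
      | inl k =>
        rw [he1, he1]
        by_cases h : k = i
        · subst h
          simp [cducChoi, hdiag]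
        · have h2 : ((k, k) : Fin d × Fin d) ≠ (i, i) := by
            simp [Prod.ext_iff, h]
          simp [cducChoi, h2]
      | inr q =>
        rw [he1, he2]
        have h1 : q.1 ≠ ((i, i) : Fin d × Fin d) := by
          intro h; exact q.2 (by rw [h])
        simp [cducChoi, h1, q.2]
    | inr p =>
      cases j with
      | inl k =>
        rw [he2, he1]
        have h1 : ((k, k) : Fin d × Fin d) ≠ p.1 := by
          intro h; exact p.2 (by rw [← h])
        simp [cducChoi, h1, p.2]
      | inr q =>
        rw [he2, he2]
        by_cases h : q = p
        · subst h
          simp [cducChoi, Matrix.diagonal_apply_eq]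
        · have h1 : q.1 ≠ p.1 := fun hv => h (Subtype.ext hv)
          simp [cducChoi, h1, p.2, Matrix.diagonal_apply_ne', Ne.symm h]
  have hr := (cducChoi A B).rank_submatrix e e
  rw [← hr, key, rank_fromBlocks_zero, Matrix.rank_diagonal]
  congr 1
  rw [Nat.card_eq_fintype_card]
  exact Fintype.card_congr
    (Equiv.subtypeSubtypeEquivSubtypeInter (fun p : Fin d × Fin d => p.1 ≠ p.2)
      (fun p => A p.1 p.2 ≠ 0))
end

section
/- Let A, B : Matrix (Fin d) (Fin d) ℂ with A having nonnegative real entries, B positive semidefinite, and B i i = A i i for all i, and let Φ_{A,B} be the associated CDUC map. Then for every vector ψ : Fin d → ℂ, rank Φ_{A,B}(ψψᴴ) ≤ rank Φ_{A,B}(e eᴴ), where e : Fin d → ℂ is the all-ones vector; in particular the maximum of rank Φ_{A,B}(ψψᴴ) over all pure states ψ is attained at the uniform vector e/√d. -/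
/-!
Using `B i i = A i i`, the image of a pure state splits as
`Φ(ψψᴴ) = D_ψ B D_ψᴴ + diag c_ψ` with `c_ψ i = ∑_{k ≠ i} A i k |ψ k|²`, a sum of two positive
semidefinite matrices, so `x ∈ ker Φ(ψψᴴ)` iff `B (ψ̄ x) = 0` and `c_ψ x = 0`. If `c_e i = 0` then
row `i` of `A` vanishes off the diagonal, so `c_ψ i = 0` as well.

Let `Z` be the zero set of `ψ` and `φ` be `ψ` with its zeros replaced by `1`, so that `D_φ̄` is
invertible and `K = ker (Φ(eeᴴ) D_φ̄)` has the dimension of `ker Φ(eeᴴ)`. The coordinate projection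
onto `Z` maps `K` into `ker Φ(ψψᴴ)`, and the vectors of `K` vanishing on `Z` already lie in
`ker Φ(ψψᴴ)` (there `ψ̄ x = φ̄ x`). The two pieces sit in complementary coordinate subspaces, so
`dim ker Φ(eeᴴ) ≤ dim ker Φ(ψψᴴ)`.
-/

open Matrix
open scoped ComplexOrder

/-- The conjugate diagonal unitary covariant (CDUC) map associated with `A`, `B`. -/
noncomputable def cducMap {d : ℕ} (A B : Matrix (Fin d) (Fin d) ℂ)
    (X : Matrix (Fin d) (Fin d) ℂ) : Matrix (Fin d) (Fin d) ℂ :=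
  Matrix.of fun i j => if i = j then ∑ k, A i k * X k k else B i j * X i j

open Finset Module

theorem Submodule.finrank_le_of_map_le_of_inf_ker_le {K V : Type*} [DivisionRing K]
    [AddCommGroup V] [Module K V] [FiniteDimensional K V] {S T : Submodule K V} {p : V →ₗ[K] V}
    (hp : IsIdempotentElem p) (hmap : S.map p ≤ T) (hker : S ⊓ LinearMap.ker p ≤ T) :
    finrank K S ≤ finrank K T := by
  have hsplit : finrank K (S.map p) + finrank K (S ⊓ LinearMap.ker p : Submodule K V) =
      finrank K S := by
    rw [← LinearMap.finrank_range_add_finrank_ker (p.domRestrict S), LinearMap.range_domRestrict,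
      LinearMap.ker_domRestrict, ← Submodule.finrank_map_subtype_eq, Submodule.map_comap_subtype]
  have hdisj : Disjoint (T ⊓ LinearMap.range p) (T ⊓ LinearMap.ker p) :=
    (LinearMap.IsIdempotentElem.isCompl hp).disjoint.mono inf_le_right inf_le_right
  calc finrank K S
      = finrank K (S.map p) + finrank K (S ⊓ LinearMap.ker p : Submodule K V) := hsplit.symm
    _ ≤ finrank K (T ⊓ LinearMap.range p : Submodule K V) +
          finrank K (T ⊓ LinearMap.ker p : Submodule K V) :=
        add_le_add (Submodule.finrank_mono (le_inf hmap LinearMap.map_le_range))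
          (Submodule.finrank_mono (le_inf hker inf_le_right))
    _ = finrank K ((T ⊓ LinearMap.range p) ⊔ (T ⊓ LinearMap.ker p) : Submodule K V) := by
        rw [← Submodule.finrank_sup_add_finrank_inf_eq, hdisj.eq_bot, finrank_bot, add_zero]
    _ ≤ finrank K T := Submodule.finrank_mono (sup_le inf_le_left inf_le_left)

theorem Matrix.diagonal_mulVec_eq_mul {n R : Type*} [Fintype n] [DecidableEq n]
    [NonUnitalNonAssocSemiring R] (v w : n → R) : diagonal v *ᵥ w = v * w :=
  funext (mulVec_diagonal v w)

theorem Matrix.rank_le_rank_of_finrank_ker_le {n 𝕜 : Type*} [Fintype n] [Field 𝕜]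
    {M N : Matrix n n 𝕜}
    (h : finrank 𝕜 (LinearMap.ker M.mulVecLin) ≤ finrank 𝕜 (LinearMap.ker N.mulVecLin)) :
    N.rank ≤ M.rank := by
  have hM := LinearMap.finrank_range_add_finrank_ker M.mulVecLin
  have hN := LinearMap.finrank_range_add_finrank_ker N.mulVecLin
  rw [rank, rank]
  omega

namespace Matrix.PosSemidef

variable {n 𝕜 : Type*} [Fintype n] [RCLike 𝕜] {P Q : Matrix n n 𝕜}

theorem add_mulVec_eq_zero_iff (hP : P.PosSemidef) (hQ : Q.PosSemidef) {x : n → 𝕜} :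
    (P + Q) *ᵥ x = 0 ↔ P *ᵥ x = 0 ∧ Q *ᵥ x = 0 := by
  rw [← (hP.add hQ).dotProduct_mulVec_zero_iff, ← hP.dotProduct_mulVec_zero_iff,
    ← hQ.dotProduct_mulVec_zero_iff, add_mulVec, dotProduct_add]
  exact add_eq_zero_iff_of_nonneg (hP.dotProduct_mulVec_nonneg x) (hQ.dotProduct_mulVec_nonneg x)

theorem mul_mul_conjTranspose_mulVec_eq_zero_iff {m : Type*} [Fintype m] (hP : P.PosSemidef)
    (C : Matrix m n 𝕜) {x : m → 𝕜} : (C * P * Cᴴ) *ᵥ x = 0 ↔ P *ᵥ (Cᴴ *ᵥ x) = 0 := by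
  rw [← (hP.mul_mul_conjTranspose_same C).dotProduct_mulVec_zero_iff,
    ← hP.dotProduct_mulVec_zero_iff, ← mulVec_mulVec, ← mulVec_mulVec, dotProduct_mulVec,
    star_mulVec, conjTranspose_conjTranspose]

end Matrix.PosSemidef

section CDUC

variable {d : ℕ} {A B : Matrix (Fin d) (Fin d) ℂ}

noncomputable def offDiagWeight (A : Matrix (Fin d) (Fin d) ℂ) (ψ : Fin d → ℂ) (i : Fin d) : ℂ :=
  ∑ k ∈ univ.erase i, A i k * (ψ k * star (ψ k))

theorem cducMap_vecMulVec_self (hdiag : ∀ i, B i i = A i i) (ψ : Fin d → ℂ) :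
    cducMap A B (vecMulVec ψ (star ψ)) =
      diagonal ψ * B * (diagonal ψ)ᴴ + diagonal (offDiagWeight A ψ) := by
  rw [diagonal_conjTranspose]
  ext i j
  rw [Matrix.add_apply, mul_diagonal, diagonal_mul]
  by_cases hij : i = j
  · subst hij
    simp only [cducMap, of_apply, if_true, vecMulVec_apply, Pi.star_apply, diagonal_apply_eq,
      offDiagWeight, hdiag, ← add_sum_erase _ _ (mem_univ i)]
    ring
  · simp only [cducMap, of_apply, if_neg hij, vecMulVec_apply, Pi.star_apply,
      diagonal_apply_ne _ hij, add_zero]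
    ring

theorem offDiagWeight_nonneg (hA : ∀ i j, 0 ≤ A i j) (ψ : Fin d → ℂ) (i : Fin d) :
    0 ≤ offDiagWeight A ψ i :=
  sum_nonneg fun k _ => mul_nonneg (hA i k) (mul_star_self_nonneg _)

theorem offDiagWeight_eq_zero_of_offDiagWeight_one_eq_zero (hA : ∀ i j, 0 ≤ A i j) {i : Fin d}
    (h : offDiagWeight A 1 i = 0) (ψ : Fin d → ℂ) : offDiagWeight A ψ i = 0 := by
  simp only [offDiagWeight, Pi.one_apply, star_one, mul_one] at h
  rw [sum_eq_zero_iff_of_nonneg fun k _ => hA i k] at h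
  exact sum_eq_zero fun k hk => by rw [h k hk, zero_mul]

theorem cducMap_vecMulVec_self_mulVec_eq_zero_iff (hA : ∀ i j, 0 ≤ A i j) (hB : B.PosSemidef)
    (hdiag : ∀ i, B i i = A i i) (ψ x : Fin d → ℂ) :
    cducMap A B (vecMulVec ψ (star ψ)) *ᵥ x = 0 ↔
      B *ᵥ (star ψ * x) = 0 ∧ ∀ i, offDiagWeight A ψ i * x i = 0 := by
  have hW : (diagonal (offDiagWeight A ψ)).PosSemidef :=
    posSemidef_diagonal_iff.mpr (offDiagWeight_nonneg hA ψ)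
  rw [cducMap_vecMulVec_self hdiag, (hB.mul_mul_conjTranspose_same _).add_mulVec_eq_zero_iff hW,
    hB.mul_mul_conjTranspose_mulVec_eq_zero_iff, diagonal_conjTranspose, diagonal_mulVec_eq_mul,
    diagonal_mulVec_eq_mul]
  exact and_congr Iff.rfl funext_iff

theorem cducMap_one_mul_diagonal_mulVec_eq_zero (hA : ∀ i j, 0 ≤ A i j) (hB : B.PosSemidef)
    (hdiag : ∀ i, B i i = A i i) {φ x : Fin d → ℂ} (hφ : ∀ i, φ i ≠ 0)
    (hx : (cducMap A B (vecMulVec 1 (star 1)) * diagonal (star φ)) *ᵥ x = 0) (ψ : Fin d → ℂ) :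
    B *ᵥ (star φ * x) = 0 ∧ ∀ i, offDiagWeight A ψ i * x i = 0 := by
  rw [← mulVec_mulVec, cducMap_vecMulVec_self_mulVec_eq_zero_iff hA hB hdiag,
    diagonal_mulVec_eq_mul, star_one, one_mul] at hx
  refine ⟨hx.1, fun i => ?_⟩
  rcases mul_eq_zero.mp (hx.2 i) with h | h
  · rw [offDiagWeight_eq_zero_of_offDiagWeight_one_eq_zero hA h, zero_mul]
  · rw [Pi.mul_apply, Pi.star_apply, mul_eq_zero, star_eq_zero] at h
    rw [h.resolve_left (hφ i), mul_zero]

theorem finrank_ker_cducMap_one_mul_diagonal_le (hA : ∀ i j, 0 ≤ A i j) (hB : B.PosSemidef)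
    (hdiag : ∀ i, B i i = A i i) {ψ φ : Fin d → ℂ} (hφ : ∀ i, φ i ≠ 0)
    (hφψ : ∀ i, ψ i ≠ 0 → φ i = ψ i) :
    finrank ℂ (LinearMap.ker (cducMap A B (vecMulVec 1 (star 1)) * diagonal (star φ)).mulVecLin) ≤
      finrank ℂ (LinearMap.ker (cducMap A B (vecMulVec ψ (star ψ))).mulVecLin) := by
  classical
  set χ : Fin d → ℂ := fun i => if ψ i = 0 then 1 else 0 with hχ
  have hχ_idem : IsIdempotentElem (diagonal χ).mulVecLin := by
    rw [IsIdempotentElem, Module.End.mul_eq_comp, ← mulVecLin_mul, diagonal_mul_diagonal]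
    congr
    funext i
    by_cases h : ψ i = 0 <;> simp [hχ, h]
  refine Submodule.finrank_le_of_map_le_of_inf_ker_le hχ_idem ?_ ?_
  · rintro _ ⟨x, hx, rfl⟩
    obtain ⟨-, hWx⟩ := cducMap_one_mul_diagonal_mulVec_eq_zero hA hB hdiag hφ hx ψ
    have hψχ : star ψ * (χ * x) = 0 := by
      funext i
      by_cases h : ψ i = 0 <;> simp [hχ, h]
    rw [LinearMap.mem_ker, mulVecLin_apply, cducMap_vecMulVec_self_mulVec_eq_zero_iff hA hB hdiag,
      mulVecLin_apply, diagonal_mulVec_eq_mul, hψχ, mulVec_zero]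
    refine ⟨rfl, fun i => ?_⟩
    rw [Pi.mul_apply, mul_left_comm, hWx i, mul_zero]
  · rintro x ⟨hx, hχx⟩
    obtain ⟨hBx, hWx⟩ := cducMap_one_mul_diagonal_mulVec_eq_zero hA hB hdiag hφ hx ψ
    rw [SetLike.mem_coe, LinearMap.mem_ker, mulVecLin_apply, diagonal_mulVec_eq_mul] at hχx
    have hψφ : star ψ * x = star φ * x := by
      funext i
      by_cases h : ψ i = 0
      · have hxi : x i = 0 := by simpa [hχ, h] using congrFun hχx i
        simp [hxi]
      · simp [hφψ i h]
    rw [LinearMap.mem_ker, mulVecLin_apply, cducMap_vecMulVec_self_mulVec_eq_zero_iff hA hB hdiag,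
      hψφ]
    exact ⟨hBx, hWx⟩

end CDUC

theorem stmt11 {d : ℕ} (A B : Matrix (Fin d) (Fin d) ℂ)
    (hA : ∀ i j, 0 ≤ (A i j).re ∧ (A i j).im = 0)
    (hB : B.PosSemidef)
    (hdiag : ∀ i, B i i = A i i) :
    ∀ ψ : Fin d → ℂ,
      (cducMap A B (vecMulVec ψ (star ψ))).rank ≤
        (cducMap A B (vecMulVec (fun _ => 1) (star fun _ => (1 : ℂ)))).rank := by
  intro ψ
  have hA' : ∀ i j, 0 ≤ A i j := fun i j => Complex.nonneg_iff.mpr ⟨(hA i j).1, (hA i j).2.symm⟩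
  set φ : Fin d → ℂ := fun i => if ψ i = 0 then 1 else ψ i
  have hφ : ∀ i, φ i ≠ 0 := fun i => by by_cases h : ψ i = 0 <;> simp [φ, h]
  have hdet : IsUnit (diagonal (star φ)).det := by
    rw [det_diagonal, isUnit_iff_ne_zero, prod_ne_zero_iff]
    exact fun i _ => star_ne_zero.mpr (hφ i)
  calc (cducMap A B (vecMulVec ψ (star ψ))).rank
      ≤ (cducMap A B (vecMulVec 1 (star 1)) * diagonal (star φ)).rank :=
        rank_le_rank_of_finrank_ker_le
          (finrank_ker_cducMap_one_mul_diagonal_le hA' hB hdiag hφ fun i h => if_neg h)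
    _ = (cducMap A B (vecMulVec 1 (star 1))).rank := rank_mul_eq_left_of_isUnit_det _ _ hdet
end

section
/- Let d ≥ 2. Let P_s = (1_{d²} + F)/2 (the projection onto the symmetric subspace), and for 0 ≤ i < j ≤ d−1 let w_{ij} : Fin d × Fin d → ℂ be the vector with value 1/√2 at (i,j), value −1/√2 at (j,i), and 0 elsewhere. Set K = P_s + ∑_{1 ≤ i < j ≤ d−1} Matrix.vecMulVec w_{ij} (star w_{ij}) (the orthogonal projection onto the kernel of the complementary Werner–Holevo channel applied to |0⟩⟨0|). Then trace(K * (1_{d²} − F)) = (d−1)·(d−2). -/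
open Matrix

/-- The flip (swap) operator on `ℂ^d ⊗ ℂ^d`. -/
def flipOp (d : ℕ) : Matrix (Fin d × Fin d) (Fin d × Fin d) ℂ :=
  Matrix.of fun p q => if p.1 = q.2 ∧ p.2 = q.1 then 1 else 0

/-!
`P_s (1 - F) = 0`, so only the rank-one projections onto the antisymmetric vectors `w_ij` with
`0 < i < j` contribute. Each `w_ij` is a unit vector with `F w_ij = -w_ij`, so it contributes
`⟨w_ij, (1 - F) w_ij⟩ = 2`, and there are `(d - 1).choose 2` such pairs.
-/

open Finset

section Flip

variable {d : ℕ}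

lemma mul_flipOp_apply (A : Matrix (Fin d × Fin d) (Fin d × Fin d) ℂ) (p q : Fin d × Fin d) :
    (A * flipOp d) p q = A p q.swap := by
  simp only [mul_apply, flipOp, of_apply, mul_ite, mul_one, mul_zero]
  rw [Fintype.sum_eq_single q.swap fun r hr => if_neg fun h => hr (Prod.ext h.1 h.2)]
  simp

lemma flipOp_mul_flipOp : flipOp d * flipOp d = 1 := by
  ext p q
  rw [mul_flipOp_apply]
  simp [flipOp, one_apply, Prod.ext_iff]

lemma one_add_flipOp_mul_one_sub_flipOp : (1 + flipOp d) * (1 - flipOp d) = 0 := by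
  rw [add_mul, one_mul, mul_sub, mul_one, flipOp_mul_flipOp]
  abel

lemma vecMulVec_mul_flipOp (u v : Fin d × Fin d → ℂ) :
    vecMulVec u v * flipOp d = vecMulVec u (v ∘ Prod.swap) := by
  ext p q
  simp [mul_flipOp_apply, vecMulVec_apply]

lemma trace_vecMulVec_star_mul_one_sub_flipOp {v : Fin d × Fin d → ℂ}
    (hv : ∀ p, v p.swap = -v p) :
    (vecMulVec v (star v) * (1 - flipOp d)).trace = 2 * (v ⬝ᵥ star v) := by
  have hswap : star v ∘ Prod.swap = -star v := funext fun p => by simp [hv]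
  rw [mul_sub, mul_one, vecMulVec_mul_flipOp, hswap, vecMulVec_neg, sub_neg_eq_add, trace_add,
    trace_vecMulVec, two_mul]

end Flip

section Antisymmetric

variable {d : ℕ} {v : Fin d × Fin d → ℂ} {i j : Fin d} {c : ℂ}

lemma apply_swap_eq_neg_of_eq_ite (hij : i ≠ j)
    (hv : ∀ p, v p = if p = (i, j) then c else if p = (j, i) then -c else 0) (p) :
    v p.swap = -v p := by
  obtain ⟨k, l⟩ := p
  simp only [hv, Prod.swap_prod_mk, Prod.mk.injEq]
  by_cases hkl : k = i ∧ l = j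
  · simp [hkl, hij]
  by_cases hlk : k = j ∧ l = i
  · simp [hlk, hij]
  simp [hkl, hlk, and_comm]

lemma dotProduct_star_self_of_eq_ite (hij : i ≠ j)
    (hv : ∀ p, v p = if p = (i, j) then c else if p = (j, i) then -c else 0) :
    v ⬝ᵥ star v = 2 * (c * star c) := by
  have hne : ((i, j) : Fin d × Fin d) ≠ (j, i) := by simp [hij]
  rw [dotProduct, Fintype.sum_eq_add (i, j) (j, i) hne fun p hp => by simp [hv, hp.1, hp.2]]
  simp [hv, hne.symm, two_mul]

end Antisymmetric

lemma sum_card_Ioi_fin (n : ℕ) : ∑ i : Fin n, #(Ioi i) = n.choose 2 := by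
  simp only [Fin.card_Ioi]
  rw [Fin.sum_univ_eq_sum_range (fun k => n - 1 - k), sum_range_reflect (fun k => k) n,
    sum_range_id, Nat.choose_two_right]

lemma sum_card_Ioi_of_ne_zero (n : ℕ) :
    ∑ i ∈ univ.filter (fun i : Fin (n + 1) => (i : ℕ) ≠ 0), #(Ioi i) = n.choose 2 := by
  rw [sum_filter, Fin.sum_univ_succ, ← sum_card_Ioi_fin]
  simp only [Fin.card_Ioi, Fin.val_zero, Fin.val_succ]
  simp [Nat.sub_add_eq, Nat.sub_right_comm]

theorem stmt14 {d : ℕ} (hd : 2 ≤ d)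
    (w : Fin d → Fin d → Fin d × Fin d → ℂ)
    (hw : ∀ i j p, w i j p =
      if p = (i, j) then ((Real.sqrt 2 : ℝ) : ℂ)⁻¹
      else if p = (j, i) then -((Real.sqrt 2 : ℝ) : ℂ)⁻¹
      else 0)
    (K : Matrix (Fin d × Fin d) (Fin d × Fin d) ℂ)
    (hK : K = (1 / 2 : ℂ) • (1 + flipOp d) +
      ∑ i ∈ Finset.univ.filter (fun i : Fin d => (i : ℕ) ≠ 0),
        ∑ j ∈ Finset.Ioi i, Matrix.vecMulVec (w i j) (star (w i j))) :
    (K * (1 - flipOp d)).trace = ((d : ℂ) - 1) * ((d : ℂ) - 2) := by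
  obtain ⟨n, rfl⟩ : ∃ n, d = n + 1 := ⟨d - 1, by omega⟩
  have hnorm : ((Real.sqrt 2 : ℝ) : ℂ)⁻¹ * star ((Real.sqrt 2 : ℝ) : ℂ)⁻¹ = 1 / 2 := by
    rw [star_inv₀, Complex.star_def, Complex.conj_ofReal, ← mul_inv, ← Complex.ofReal_mul,
      Real.mul_self_sqrt zero_le_two]
    norm_num
  have hterm : ∀ i, ∀ j ∈ Ioi i, (vecMulVec (w i j) (star (w i j)) * (1 - flipOp _)).trace = 2 :=
    fun i j hj => by
      have hij := (mem_Ioi.mp hj).ne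
      rw [trace_vecMulVec_star_mul_one_sub_flipOp (apply_swap_eq_neg_of_eq_ite hij (hw i j)),
        dotProduct_star_self_of_eq_ite hij (hw i j), hnorm]
      norm_num
  rw [hK, add_mul, smul_mul, one_add_flipOp_mul_one_sub_flipOp, smul_zero, zero_add, sum_mul,
    trace_sum]
  simp_rw [sum_mul, trace_sum]
  rw [sum_congr rfl fun i _ => sum_congr rfl (hterm i)]
  simp only [sum_const, nsmul_eq_mul]
  rw [← sum_mul, ← Nat.cast_sum, sum_card_Ioi_of_ne_zero, Nat.cast_choose_two]
  push_cast
  ring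
end

section
/- Let R > 0 and let f : ℝ → ℝ be real analytic on the half-open interval [0, R) (i.e., analytic at every point of [0,R)), with f(x) ≥ 0 for all x ∈ [0, R), and f not identically zero on [0, R). Let g(x) = f(x) · Real.log (f(x)). Then there exists r ∈ (0, R) such that g is real analytic on (0, r) and the following equivalence holds: the derivative of g is unbounded on (0, r') for every r' ∈ (0, r] if and only if f(0) = 0 and deriv f 0 ≠ 0; equivalently, the set {|deriv g x| : x ∈ (0, r)} is bounded above if and only if ¬(f(0) = 0 ∧ deriv f 0 ≠ 0). -/
/-!
Near `0`, `f x = x ^ n * G x` with `G 0 ≠ 0`. Since `f ≥ 0` has isolated zeros, `f > 0` on some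
`(0, r]`, where `g = f log f` is analytic with `g' = f' (log f + 1)`. If `f 0 ≠ 0`, `g'` is continuous
at `0`. If `n = 1`, i.e. `f 0 = 0 ≠ f' 0`, then `f' → f' 0 ≠ 0` while `log f → -∞`, so `|g'| → ∞`.
If `n ≥ 2`, `g' = (n G + x G') (n x ^ (n - 1) log x + x ^ (n - 1) (log G + 1)) → 0`. A finite limit
at `0⁺` together with continuity on `(0, r]` bounds `g'` on `(0, r)`.
-/

open Filter Set Topology Real

lemma deriv_mul_log_comp {f : ℝ → ℝ} {x : ℝ} (hf : DifferentiableAt ℝ f x) (hx : f x ≠ 0) :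
    deriv (fun y => f y * log (f y)) x = deriv f x * (log (f x) + 1) :=
  ((hasDerivAt_mul_log hx).comp x hf.hasDerivAt).deriv.trans (mul_comm _ _)

lemma AnalyticAt.eventually_pos_of_eventually_nonneg {f : ℝ → ℝ} {a : ℝ} (hf : AnalyticAt ℝ f a)
    (hne : ¬∀ᶠ x in 𝓝 a, f x = 0) (hnn : ∀ᶠ x in 𝓝[>] a, 0 ≤ f x) :
    ∀ᶠ x in 𝓝[>] a, 0 < f x := by
  have hne' : ∀ᶠ x in 𝓝[>] a, f x ≠ 0 :=
    nhdsWithin_mono _ (fun x (hx : a < x) => hx.ne')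
      (hf.eventually_eq_zero_or_eventually_ne_zero.resolve_left hne)
  filter_upwards [hnn, hne'] with x h₁ h₂ using h₁.lt_of_ne' h₂

lemma bddAbove_image_Ioo_of_tendsto {h : ℝ → ℝ} {a r L : ℝ} (hc : ContinuousOn h (Ioc a r))
    (hL : Tendsto h (𝓝[>] a) (𝓝 L)) : BddAbove (h '' Ioo a r) := by
  obtain ⟨t, ht, hat⟩ := isBoundedUnder_iff_eventually_bddAbove.1 hL.isBoundedUnder_le
  obtain ⟨δ, hδ, hδt⟩ := mem_nhdsGT_iff_exists_Ioo_subset.1 hat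
  have hcompact : BddAbove (h '' Icc δ r) :=
    isCompact_Icc.bddAbove_image (hc.mono (Icc_subset_Ioc hδ le_rfl))
  refine ((ht.mono (image_mono hδt)).union hcompact).mono ?_
  rw [← image_union]
  refine image_mono fun x hx => ?_
  rcases lt_or_ge x δ with hxδ | hxδ
  · exact Or.inl ⟨hx.1, hxδ⟩
  · exact Or.inr ⟨hxδ, hx.2.le⟩

lemma tendsto_abs_deriv_mul_log_add_one_atTop {f : ℝ → ℝ} {a : ℝ} (hf : ContinuousAt f a)
    (hf' : ContinuousAt (deriv f) a) (ha : f a = 0) (hda : deriv f a ≠ 0)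
    (hpos : ∀ᶠ x in 𝓝[>] a, 0 < f x) :
    Tendsto (fun x => |deriv f x * (log (f x) + 1)|) (𝓝[>] a) atTop := by
  have hf0 : Tendsto f (𝓝[>] a) (𝓝[>] 0) :=
    tendsto_nhdsWithin_iff.2 ⟨ha ▸ hf.tendsto.mono_left nhdsWithin_le_nhds, hpos⟩
  have hlog : Tendsto (fun x => |log (f x) + 1|) (𝓝[>] a) atTop :=
    tendsto_abs_atBot_atTop.comp
      (tendsto_atBot_add_const_right _ 1 (tendsto_log_nhdsGT_zero.comp hf0))
  simp_rw [abs_mul]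
  exact (hf'.tendsto.mono_left nhdsWithin_le_nhds).abs.pos_mul_atTop (abs_pos.2 hda) hlog

lemma two_le_of_eventuallyEq_pow_mul {f G : ℝ → ℝ} {n : ℕ} (hG : DifferentiableAt ℝ G 0)
    (hG0 : G 0 ≠ 0) (hfG : f =ᶠ[𝓝 0] fun x => x ^ n * G x) (hf0 : f 0 = 0)
    (hdf0 : deriv f 0 = 0) : 2 ≤ n := by
  have hd : HasDerivAt (fun x => x ^ n * G x) _ 0 := (hasDerivAt_pow n 0).mul hG.hasDerivAt
  rw [hfG.deriv_eq, hd.deriv] at hdf0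
  rw [hfG.eq_of_nhds] at hf0
  rcases n with _ | _ | n
  · simp_all
  · simp_all
  · omega

lemma tendsto_pow_mul_log_nhdsGT_zero {k : ℕ} (hk : k ≠ 0) :
    Tendsto (fun x => x ^ k * log x) (𝓝[>] 0) (𝓝 0) := by
  have := tendsto_log_mul_rpow_nhdsGT_zero (r := k) (by positivity)
  simpa only [rpow_natCast, mul_comm] using this

lemma tendsto_deriv_mul_log_add_one_of_deriv_eq_zero {f : ℝ → ℝ} (hf : AnalyticAt ℝ f 0)
    (hne : ¬∀ᶠ x in 𝓝 0, f x = 0) (hf0 : f 0 = 0) (hdf0 : deriv f 0 = 0) :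
    Tendsto (fun x => deriv f x * (log (f x) + 1)) (𝓝[>] 0) (𝓝 0) := by
  obtain ⟨n, G, hG, hG0, hfG⟩ := hf.exists_eventuallyEq_pow_smul_nonzero_iff.2 hne
  replace hfG : f =ᶠ[𝓝 0] fun x => x ^ n * G x := by
    simp only [sub_zero, smul_eq_mul] at hfG
    exact hfG
  have hn := two_le_of_eventuallyEq_pow_mul hG.differentiableAt hG0 hfG hf0 hdf0
  obtain ⟨k, rfl⟩ := Nat.exists_eq_add_of_le' (one_le_two.trans hn)
  have hk : k ≠ 0 := by omega
  have hform : ∀ᶠ x in 𝓝[>] 0, ((k + 1) * G x + x * deriv G x) *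
      ((k + 1) * (x ^ k * log x) + x ^ k * (log (G x) + 1)) = deriv f x * (log (f x) + 1) := by
    filter_upwards [nhdsWithin_le_nhds hfG.deriv, nhdsWithin_le_nhds hfG,
      nhdsWithin_le_nhds hG.eventually_analyticAt,
      nhdsWithin_le_nhds (hG.continuousAt.eventually_ne hG0), self_mem_nhdsWithin]
      with x hdx hx hGa hGx (hx0 : 0 < x)
    have hd : HasDerivAt (fun x => x ^ (k + 1) * G x) _ x :=
      (hasDerivAt_pow _ x).mul hGa.differentiableAt.hasDerivAt
    rw [hdx, hx, hd.deriv, log_mul (pow_ne_zero _ hx0.ne') hGx, log_pow]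
    push_cast
    ring
  refine Tendsto.congr' hform ?_
  have hA : ContinuousAt (fun x => (k + 1) * G x + x * deriv G x) 0 := by
    have := hG.continuousAt
    have := hG.deriv.continuousAt
    fun_prop
  have hB : Tendsto (fun x => (k + 1) * (x ^ k * log x) + x ^ k * (log (G x) + 1)) (𝓝[>] 0)
      (𝓝 ((k + 1) * 0 + 0 ^ k * (log (G 0) + 1))) :=
    ((tendsto_pow_mul_log_nhdsGT_zero hk).const_mul _).add
      (((continuous_pow k).continuousAt.mul
        ((hG.continuousAt.log hG0).add continuousAt_const)).tendsto.mono_left nhdsWithin_le_nhds)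
  simpa [zero_pow hk] using (hA.tendsto.mono_left nhdsWithin_le_nhds).mul hB

theorem stmt16 (R : ℝ) (hR : 0 < R) (f : ℝ → ℝ)
    (hf : AnalyticOnNhd ℝ f (Set.Ico 0 R))
    (hnn : ∀ x ∈ Set.Ico 0 R, 0 ≤ f x)
    (hne : ∃ x ∈ Set.Ico 0 R, f x ≠ 0) :
    ∃ r ∈ Set.Ioo 0 R,
      AnalyticOnNhd ℝ (fun x => f x * Real.log (f x)) (Set.Ioo 0 r) ∧
      (BddAbove ((fun x => |deriv (fun y => f y * Real.log (f y)) x|) '' Set.Ioo 0 r) ↔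
        ¬ (f 0 = 0 ∧ deriv f 0 ≠ 0)) := by
  have h0 : (0 : ℝ) ∈ Ico 0 R := ⟨le_rfl, hR⟩
  have hf0 := hf 0 h0
  have hne0 : ¬∀ᶠ x in 𝓝 0, f x = 0 := fun hev => by
    obtain ⟨x, hx, hfx⟩ := hne
    exact hfx (hf.eqOn_zero_of_preconnected_of_eventuallyEq_zero isPreconnected_Ico h0 hev hx)
  have hnn0 : ∀ᶠ x in 𝓝[>] 0, 0 ≤ f x :=
    eventually_of_mem (Ioo_mem_nhdsGT hR) fun x hx => hnn x ⟨hx.1.le, hx.2⟩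
  have hpos : ∀ᶠ x in 𝓝[>] 0, 0 < f x ∧ x < R :=
    (hf0.eventually_pos_of_eventually_nonneg hne0 hnn0).and
      (nhdsWithin_le_nhds (eventually_lt_nhds hR))
  obtain ⟨r, hr, hsub⟩ := mem_nhdsGT_iff_exists_Ioc_subset.1 hpos
  have hg : AnalyticOnNhd ℝ (fun x => f x * log (f x)) (Ioc 0 r) := by
    have hfr := hf.mono fun x hx => ⟨hx.1.le, (hsub hx).2⟩
    exact hfr.mul (hfr.log fun x hx => (hsub hx).1)
  have hg' : deriv (fun y => f y * log (f y)) =ᶠ[𝓝[>] 0] fun x => deriv f x * (log (f x) + 1) :=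
    eventually_of_mem (Ioo_mem_nhdsGT hr) fun x hx =>
      deriv_mul_log_comp (hf x ⟨hx.1.le, (hsub (Ioo_subset_Ioc_self hx)).2⟩).differentiableAt
        (hsub (Ioo_subset_Ioc_self hx)).1.ne'
  refine ⟨r, ⟨hr, (hsub ⟨hr, le_rfl⟩).2⟩, hg.mono Ioo_subset_Ioc_self, ?_⟩
  by_cases hcase : f 0 = 0 ∧ deriv f 0 ≠ 0
  · refine iff_of_false (fun hb => not_isBoundedUnder_of_tendsto_atTop ?_
      (hb.isBoundedUnder (Ioo_mem_nhdsGT hr))) (not_not.2 hcase)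
    refine (tendsto_abs_deriv_mul_log_add_one_atTop hf0.continuousAt hf0.deriv.continuousAt
      hcase.1 hcase.2 (hpos.mono fun x hx => hx.1)).congr' ?_
    filter_upwards [hg'] with x hx
    rw [hx]
  · obtain ⟨L, hL⟩ : ∃ L, Tendsto (fun x => deriv f x * (log (f x) + 1)) (𝓝[>] 0) (𝓝 L) := by
      by_cases hf00 : f 0 = 0
      · exact ⟨0, tendsto_deriv_mul_log_add_one_of_deriv_eq_zero hf0 hne0 hf00
          (not_not.1 (not_and.1 hcase hf00))⟩
      · exact ⟨_, (hf0.deriv.continuousAt.mul ((hf0.continuousAt.log hf00).add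
          continuousAt_const)).tendsto.mono_left nhdsWithin_le_nhds⟩
    exact iff_of_true (bddAbove_image_Ioo_of_tendsto hg.deriv.continuousOn.abs
      (hL.congr' hg'.symm).abs) hcase
end

section
/- Let ρ : Matrix (Fin d) (Fin d) ℂ be positive semidefinite, and let R : Matrix (Fin d) (Fin d) ℂ be the orthogonal projection onto the range of ρ, i.e. R is Hermitian, R * R = R, and for all x : Fin d → ℂ, R.mulVec x = x if and only if x lies in the range of ρ.mulVecLin. Let Φ : Matrix (Fin d) (Fin d) ℂ →ₗ[ℂ] Matrix (Fin n) (Fin n) ℂ be a linear map that sends positive semidefinite matrices to positive semidefinite matrices. Then the range of (Φ R).mulVecLin equals the range of (Φ ρ).mulVecLin. -/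
/-!
The projection `R` is the support projection of `ρ`, obtained from `ρ` by the functional calculus
of the indicator function of `ℝ ∖ {0}`. As the spectrum of `ρ` is finite and nonnegative, `R` and
`ρ` are comparable in the Loewner order: `R ≤ c • ρ` and `ρ ≤ C • R`. A positive map preserves both
inequalities, and comparable positive semidefinite matrices have the same kernel, hence, being
Hermitian, the same range.
-/

open Matrix
open scoped ComplexOrder MatrixOrder

lemma IsSelfAdjoint.eq_of_mul_eq_right {α : Type*} [Mul α] [StarMul α] {p q : α}
    (hp : IsSelfAdjoint p) (hq : IsSelfAdjoint q) (hpq : p * q = q) (hqp : q * p = p) :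
    p = q := by
  rw [← hqp, ← hp.star_eq, ← hq.star_eq, ← star_mul, hpq, hq.star_eq]

namespace Matrix

variable {𝕜 n : Type*} [RCLike 𝕜]

lemma monotone_of_map_posSemidef {m : Type*} (Φ : Matrix n n 𝕜 →ₗ[𝕜] Matrix m m 𝕜)
    (hΦ : ∀ M, M.PosSemidef → (Φ M).PosSemidef) : Monotone Φ := fun _ _ h => by
  simpa only [le_iff, map_sub] using hΦ _ h

variable [Fintype n]

lemma PosSemidef.ker_le_of_le_smul {A B : Matrix n n 𝕜} (hB : B.PosSemidef) {c : ℝ}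
    (h : B ≤ c • A) : LinearMap.ker A.mulVecLin ≤ LinearMap.ker B.mulVecLin := by
  intro x hx
  rw [LinearMap.mem_ker, mulVecLin_apply] at hx ⊢
  have hle := (le_iff.mp h).dotProduct_mulVec_nonneg x
  rw [sub_mulVec, smul_mulVec, hx, smul_zero, zero_sub, dotProduct_neg, neg_nonneg] at hle
  exact (hB.dotProduct_mulVec_zero_iff x).mp (le_antisymm hle (hB.dotProduct_mulVec_nonneg x))

variable [DecidableEq n]

lemma IsHermitian.mem_range_mulVecLin_iff {A : Matrix n n 𝕜} (hA : A.IsHermitian)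
    (y : n → 𝕜) :
    y ∈ LinearMap.range A.mulVecLin ↔ ∀ x ∈ LinearMap.ker A.mulVecLin, star x ⬝ᵥ y = 0 := by
  have hrange : LinearMap.range (toEuclideanLin A) = (LinearMap.ker (toEuclideanLin A))ᗮ := by
    rw [LinearMap.orthogonal_ker, ← toEuclideanLin_conjTranspose_eq_adjoint, hA.eq]
  have hy := congrArg (WithLp.toLp 2 y ∈ ·) hrange
  simp only [LinearMap.mem_range, Submodule.mem_orthogonal, LinearMap.mem_ker,
    EuclideanSpace.inner_eq_star_dotProduct, (WithLp.equiv 2 (n → 𝕜)).symm.surjective.exists,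
    (WithLp.equiv 2 (n → 𝕜)).symm.surjective.forall, eq_iff_iff] at hy
  simpa [toLpLin_apply, dotProduct_comm] using hy

lemma IsHermitian.range_mulVecLin_eq_of_ker_eq {A B : Matrix n n 𝕜} (hA : A.IsHermitian)
    (hB : B.IsHermitian) (h : LinearMap.ker A.mulVecLin = LinearMap.ker B.mulVecLin) :
    LinearMap.range A.mulVecLin = LinearMap.range B.mulVecLin := by
  ext y
  rw [hA.mem_range_mulVecLin_iff, hB.mem_range_mulVecLin_iff, h]

/-- Since `0⁻¹ = 0`, the function `x * x⁻¹` is the indicator function of `x ≠ 0`. -/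
noncomputable def supportProjection (A : Matrix n n 𝕜) : Matrix n n 𝕜 :=
  cfc (fun x : ℝ => x * x⁻¹) A

section supportProjection

variable {A : Matrix n n 𝕜}

lemma isHermitian_supportProjection (A : Matrix n n 𝕜) : (supportProjection A).IsHermitian :=
  cfc_predicate _ A

lemma IsHermitian.supportProjection_mul_self (hA : A.IsHermitian) :
    supportProjection A * A = A := by
  conv_lhs => rhs; rw [← cfc_id' ℝ A hA.isSelfAdjoint]
  rw [supportProjection, ← cfc_mul _ _ _ (finite_real_spectrum.continuousOn _)]
  simp only [mul_inv_mul_cancel]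
  exact cfc_id' ℝ A hA.isSelfAdjoint

lemma IsHermitian.supportProjection_eq_mul (hA : A.IsHermitian) :
    supportProjection A = A * cfc (fun x : ℝ => x⁻¹) A := by
  conv_rhs => lhs; rw [← cfc_id' ℝ A hA.isSelfAdjoint]
  exact cfc_mul _ _ _ continuousOn_id (finite_real_spectrum.continuousOn _)

lemma IsHermitian.eq_supportProjection (hA : A.IsHermitian) {R : Matrix n n 𝕜}
    (hR : R.IsHermitian) (hRR : R * R = R)
    (hR_fix : ∀ x, R *ᵥ x = x ↔ x ∈ LinearMap.range A.mulVecLin) :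
    R = supportProjection A := by
  refine hR.isSelfAdjoint.eq_of_mul_eq_right (isHermitian_supportProjection A).isSelfAdjoint
    (ext_of_mulVec_single fun i => ?_) (ext_of_mulVec_single fun i => ?_)
  · rw [← mulVec_mulVec, hR_fix, hA.supportProjection_eq_mul, ← mulVec_mulVec]
    exact LinearMap.mem_range_self _ _
  · obtain ⟨y, hy⟩ := (hR_fix (R *ᵥ Pi.single i 1)).mp (by rw [mulVec_mulVec, hRR])
    rw [← mulVec_mulVec, ← hy, mulVecLin_apply, mulVec_mulVec, hA.supportProjection_mul_self]

lemma PosSemidef.supportProjection_le_smul (hA : A.PosSemidef) :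
    ∃ c : ℝ, supportProjection A ≤ c • A := by
  obtain ⟨c, hc⟩ := (finite_real_spectrum (A := A)).image (·⁻¹) |>.bddAbove
  refine ⟨c, ?_⟩
  conv_rhs => rw [← cfc_id' ℝ A hA.isHermitian.isSelfAdjoint]
  rw [supportProjection, ← cfc_const_mul c _ A]
  refine cfc_mono (fun x hx => ?_) (finite_real_spectrum.continuousOn _)
  have hxc : x⁻¹ ≤ c := hc ⟨x, hx, rfl⟩
  rcases (spectrum_nonneg_of_nonneg hA.nonneg hx).eq_or_lt with rfl | hx_pos
  · simp
  · rw [mul_inv_cancel₀ hx_pos.ne']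
    calc (1 : ℝ) = x⁻¹ * x := (inv_mul_cancel₀ hx_pos.ne').symm
      _ ≤ c * x := by gcongr

lemma IsHermitian.le_smul_supportProjection (hA : A.IsHermitian) :
    ∃ C : ℝ, A ≤ C • supportProjection A := by
  obtain ⟨C, hC⟩ := (finite_real_spectrum (A := A)).bddAbove
  refine ⟨C, ?_⟩
  conv_lhs => rw [← cfc_id' ℝ A hA.isSelfAdjoint]
  rw [supportProjection, ← cfc_const_mul _ _ _ (finite_real_spectrum.continuousOn _)]
  refine cfc_mono (fun x hx => ?_) continuousOn_id (finite_real_spectrum.continuousOn _)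
  rcases eq_or_ne x 0 with rfl | hx0
  · simp
  · simpa [mul_inv_cancel₀ hx0] using hC hx

end supportProjection

end Matrix

theorem stmt18 {d n : ℕ} (ρ : Matrix (Fin d) (Fin d) ℂ) (hρ : ρ.PosSemidef)
    (R : Matrix (Fin d) (Fin d) ℂ) (hR1 : Rᴴ = R) (hR2 : R * R = R)
    (hR3 : ∀ x : Fin d → ℂ, R.mulVec x = x ↔ x ∈ LinearMap.range ρ.mulVecLin)
    (Φ : Matrix (Fin d) (Fin d) ℂ →ₗ[ℂ] Matrix (Fin n) (Fin n) ℂ)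
    (hΦ : ∀ M : Matrix (Fin d) (Fin d) ℂ, M.PosSemidef → (Φ M).PosSemidef) :
    LinearMap.range (Φ R).mulVecLin = LinearMap.range (Φ ρ).mulVecLin := by
  have hΦR : (Φ R).PosSemidef := hΦ R <| by
    simpa only [hR1, hR2] using posSemidef_conjTranspose_mul_self R
  have hΦρ : (Φ ρ).PosSemidef := hΦ ρ hρ
  have hR : R = supportProjection ρ := hρ.isHermitian.eq_supportProjection hR1 hR2 hR3
  obtain ⟨c, hRρ⟩ := hρ.supportProjection_le_smul
  obtain ⟨C, hρR⟩ := hρ.isHermitian.le_smul_supportProjection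
  rw [← hR] at hRρ hρR
  have hΦ_mono := monotone_of_map_posSemidef Φ hΦ
  refine hΦR.isHermitian.range_mulVecLin_eq_of_ker_eq hΦρ.isHermitian (le_antisymm ?_ ?_)
  · exact hΦρ.ker_le_of_le_smul (by simpa only [LinearMap.map_smul_of_tower] using hΦ_mono hρR)
  · exact hΦR.ker_le_of_le_smul (by simpa only [LinearMap.map_smul_of_tower] using hΦ_mono hRρ)
end

section
/- Let d ≥ 1, let X, Y : Matrix (Fin d) (Fin d) ℂ, let ψ : Fin d → ℂ, and let c1, c2 : Fin d → Fin d satisfy c1 i ≠ c2 i for every i. Assume that each row of X has exactly two nonzero entries, located in columns c1 i and c2 i: for all i, j, X i j ≠ 0 ↔ (j = c1 i ∨ j = c2 i). Assume Y is obtained from X by the swap rule: Y i (c1 i) = X i (c1 i) * ψ (c2 i), Y i (c2 i) = X i (c2 i) * ψ (c1 i), and Y i j = 0 whenever j ≠ c1 i and j ≠ c2 i. Then det Y * ∏_j ψ j = det X * ∏_j (ψ j)^(n_j), where n_j is the number of indices i with X i j ≠ 0 (this is the identity det Y = (∏_j ψ_j^{n_j − 1}) · det X with denominators cleared). -/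
open Matrix

theorem stmt19 {d : ℕ} (hd : 1 ≤ d) (X Y : Matrix (Fin d) (Fin d) ℂ)
    (ψ : Fin d → ℂ) (c1 c2 : Fin d → Fin d) (hc : ∀ i, c1 i ≠ c2 i)
    (hX : ∀ i j, X i j ≠ 0 ↔ (j = c1 i ∨ j = c2 i))
    (hY1 : ∀ i, Y i (c1 i) = X i (c1 i) * ψ (c2 i))
    (hY2 : ∀ i, Y i (c2 i) = X i (c2 i) * ψ (c1 i))
    (hY3 : ∀ i j, j ≠ c1 i → j ≠ c2 i → Y i j = 0) :
    Y.det * ∏ j, ψ j = X.det * ∏ j, ψ j ^ Nat.card {i : Fin d // X i j ≠ 0} := by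
  have key : Y * Matrix.diagonal ψ
      = Matrix.diagonal (fun i => ψ (c1 i) * ψ (c2 i)) * X := by
    ext i j
    rw [Matrix.mul_diagonal, Matrix.diagonal_mul]
    by_cases h1 : j = c1 i
    · subst h1; rw [hY1]; ring
    · by_cases h2 : j = c2 i
      · subst h2; rw [hY2]; ring
      · rw [hY3 i j h1 h2]
        have : X i j = 0 := by
          by_contra hne
          rcases (hX i j).1 hne with h | h <;> [exact h1 h; exact h2 h]
        rw [this]; ring
  have hdet := congrArg Matrix.det key
  rw [Matrix.det_mul, Matrix.det_mul, Matrix.det_diagonal, Matrix.det_diagonal] at hdet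
  rw [hdet, mul_comm]
  congr 1
  have hcount : ∀ j, Nat.card {i : Fin d // X i j ≠ 0}
      = ∑ i : Fin d, ((if j = c1 i then 1 else 0) + (if j = c2 i then 1 else 0)) := by
    intro j
    rw [Nat.card_eq_fintype_card, Fintype.card_subtype]
    rw [Finset.card_eq_sum_ones]
    rw [Finset.sum_filter]
    apply Finset.sum_congr rfl
    intro i _
    by_cases h1 : j = c1 i
    · have h2 : j ≠ c2 i := fun h => hc i (h1 ▸ h)
      simp [hX, h1, h2, hc i, (hc i).symm]
    · by_cases h2 : j = c2 i
      · simp [hX, h1, h2, hc i, (hc i).symm]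
      · simp [hX, h1, h2, hc i, (hc i).symm]
  calc (∏ i : Fin d, ψ (c1 i) * ψ (c2 i))
      = ∏ i : Fin d, ∏ j : Fin d,
          ψ j ^ ((if j = c1 i then 1 else 0) + (if j = c2 i then 1 else 0)) := by
        apply Finset.prod_congr rfl
        intro i _
        rw [show (fun j => ψ j ^ ((if j = c1 i then 1 else 0) + (if j = c2 i then 1 else 0)))
            = fun j => ψ j ^ (if j = c1 i then 1 else 0) * ψ j ^ (if j = c2 i then 1 else 0)
          from funext fun j => pow_add _ _ _]
        rw [Finset.prod_mul_distrib]
        congr 1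
        · rw [Finset.prod_eq_single (c1 i)] <;> simp +contextual
        · rw [Finset.prod_eq_single (c2 i)] <;> simp +contextual
    _ = ∏ j : Fin d, ∏ i : Fin d,
          ψ j ^ ((if j = c1 i then 1 else 0) + (if j = c2 i then 1 else 0)) :=
        Finset.prod_comm
    _ = ∏ j, ψ j ^ Nat.card {i : Fin d // X i j ≠ 0} := by
        apply Finset.prod_congr rfl
        intro j _
        rw [hcount, Finset.prod_pow_eq_pow_sum]
end
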